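/- arXiv:2408.15506 — 3 statements merged into one kernel-verified Lean document; each statement's English description precedes it below -/
import Mathlib

section
/- The following interlacing relations hold: for every integer d ≥ 1, g_{2d,d}(t) ⪯ g_{2d+2,d+1}(t) and g_{2d+1,d}(t) ⪯ g_{2d+3,d+1}(t); and for every integer n ≥ 2, g_{n,⌊n/2⌋}(t) ⪯ g_{n+1,⌊(n+1)/2⌋}(t). Consequently the sequences {g_{2d,d}(t)}_{d≥1}, {g_{2d+1,d}(t)}_{d≥1}, and {g_{n,⌊n/2⌋}(t)}_{n≥2} are generalized Sturm sequences. -/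
open Polynomial

/-- Speyer's g-polynomial of the uniform matroid `U_{n,d}` as a real polynomial:
`g_{n,d}(t) = Σ_{i=1}^{min(d, n-d)} ((n-i-1)! / ((d-i)! (n-d-i)! (i-1)!)) t^i`.
When `d = 0` or `d = n` the sum is empty, so `gPoly n d = 0`, matching the convention. -/
noncomputable def gPoly (n d : ℕ) : Polynomial ℝ :=
  ∑ i ∈ Finset.Icc 1 (min d (n - d)),
    C ((Nat.factorial (n - i - 1) : ℝ) /
        ((Nat.factorial (d - i) : ℝ) * (Nat.factorial (n - d - i) : ℝ) *
          (Nat.factorial (i - 1) : ℝ))) * X ^ i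

/-- A real polynomial is real-rooted (has only real zeros) if its number of real roots,
counted with multiplicity, equals its degree. -/
def RealRooted (f : Polynomial ℝ) : Prop :=
  Multiset.card f.roots = f.natDegree

/-- The real roots of `f`, with multiplicity, listed in increasing order. -/
noncomputable def ascRoots (f : Polynomial ℝ) : List ℝ :=
  f.roots.sort (· ≤ ·)

/-- `Interlaces g f` means `g ⪯ f`: both polynomials are real-rooted and, writing the
roots of `f` in decreasing order as `α_1 ≥ α_2 ≥ ⋯` and those of `g` as `β_1 ≥ β_2 ≥ ⋯`
(equivalently, in increasing order as `a_1 ≤ ⋯ ≤ a_m` and `b_1 ≤ ⋯`), either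
`deg f = deg g = m` and `β_m ≤ α_m ≤ β_{m-1} ≤ ⋯ ≤ β_1 ≤ α_1`
(i.e. `b_1 ≤ a_1 ≤ b_2 ≤ a_2 ≤ ⋯ ≤ b_m ≤ a_m`), or `deg f = deg g + 1 = m` and
`α_m ≤ β_{m-1} ≤ α_{m-1} ≤ ⋯ ≤ β_1 ≤ α_1` (i.e. `a_1 ≤ b_1 ≤ a_2 ≤ ⋯ ≤ b_{m-1} ≤ a_m`);
by convention `0 ⪯ f` and `f ⪯ 0` for any real-rooted `f` (and the convention
`a ⪯ bt + c` for constants is subsumed by the two degree cases, whose conditions are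
then vacuous). -/
def Interlaces (g f : Polynomial ℝ) : Prop :=
  RealRooted g ∧ RealRooted f ∧
    (g = 0 ∨ f = 0 ∨
      (f.natDegree = g.natDegree ∧
        (∀ i < f.natDegree, (ascRoots g).getD i 0 ≤ (ascRoots f).getD i 0) ∧
        (∀ i, i + 1 < f.natDegree → (ascRoots f).getD i 0 ≤ (ascRoots g).getD (i + 1) 0)) ∨
      (f.natDegree = g.natDegree + 1 ∧
        (∀ i < g.natDegree, (ascRoots f).getD i 0 ≤ (ascRoots g).getD i 0) ∧
        (∀ i < g.natDegree, (ascRoots g).getD i 0 ≤ (ascRoots f).getD (i + 1) 0)))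

namespace GSturm

open Filter

def RootData (f : Polynomial ℝ) (lc : ℝ) (L : List ℝ) : Prop :=
  0 < lc ∧ L.Pairwise (· < ·) ∧ (∀ r ∈ L, r < -1) ∧
    f = C lc * ((L ++ [(0:ℝ)]).map fun r => X - C r).prod

theorem RootData.lc_pos {f lc L} (h : RootData f lc L) : 0 < lc := h.1

theorem RootData.prod_monic {f lc L} (_ : RootData f lc L) :
    (((L ++ [(0:ℝ)]).map fun r => X - C r).prod).Monic := by
  have : (((↑(L ++ [(0:ℝ)]) : Multiset ℝ).map fun r => X - C r).prod).Monic := by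
    apply monic_multiset_prod_of_monic
    intro r _
    exact monic_X_sub_C r
  simpa using this

theorem RootData.roots_eq {f lc L} (h : RootData f lc L) :
    f.roots = (↑(L ++ [(0:ℝ)]) : Multiset ℝ) := by
  rw [h.2.2.2, roots_C_mul _ (ne_of_gt h.1)]
  rw [show ((L ++ [(0:ℝ)]).map fun r : ℝ => X - C r).prod
      = ((↑(L ++ [(0:ℝ)]) : Multiset ℝ).map fun r : ℝ => X - C r).prod from rfl]
  exact roots_multiset_prod_X_sub_C _

theorem RootData.ne_zero {f lc L} (h : RootData f lc L) : f ≠ 0 := by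
  rw [h.2.2.2]
  exact mul_ne_zero (by simpa using ne_of_gt h.1) h.prod_monic.ne_zero

theorem RootData.natDegree_eq {f lc L} (h : RootData f lc L) :
    f.natDegree = L.length + 1 := by
  rw [h.2.2.2, natDegree_C_mul (ne_of_gt h.1)]
  rw [show ((L ++ [(0:ℝ)]).map fun r : ℝ => X - C r).prod
      = ((↑(L ++ [(0:ℝ)]) : Multiset ℝ).map fun r : ℝ => X - C r).prod from rfl]
  rw [natDegree_multiset_prod_X_sub_C_eq_card]
  simp

theorem RootData.realRooted {f lc L} (h : RootData f lc L) : RealRooted f := by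
  unfold RealRooted
  rw [h.roots_eq, h.natDegree_eq]; simp

theorem RootData.sorted {f lc L} (h : RootData f lc L) :
    (L ++ [(0:ℝ)]).Pairwise (· < ·) := by
  rw [List.pairwise_append]
  refine ⟨h.2.1, List.pairwise_singleton _ _, ?_⟩
  intro x hx y hy
  simp only [List.mem_singleton] at hy
  subst hy
  exact lt_trans (h.2.2.1 x hx) (by norm_num)

theorem RootData.ascRoots_eq {f lc L} (h : RootData f lc L) :
    ascRoots f = L ++ [(0:ℝ)] := by
  unfold ascRoots
  rw [h.roots_eq]
  refine List.Perm.eq_of_pairwise' (r := (· ≤ ·))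
    (Multiset.pairwise_sort _ _) (List.Pairwise.imp le_of_lt h.sorted)
    (Multiset.coe_eq_coe.mp (Multiset.sort_eq _ _))

theorem RootData.leadingCoeff_eq {f lc L} (h : RootData f lc L) :
    f.leadingCoeff = lc := by
  rw [h.2.2.2, leadingCoeff_mul, leadingCoeff_C, h.prod_monic.leadingCoeff, mul_one]

theorem RootData.eval_zero {f lc L} (h : RootData f lc L) : f.eval 0 = 0 := by
  rw [h.2.2.2]
  simp [eval_list_prod]

theorem RootData.eval_neg_one_neg {f lc L} (h : RootData f lc L) : f.eval (-1) < 0 := by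
  rw [h.2.2.2]
  rw [eval_mul, eval_C, eval_list_prod, List.map_map, List.map_append, List.prod_append]
  have h1 : 0 < ((L.map (eval (-1) ∘ fun r => X - C r))).prod := by
    apply List.prod_pos
    intro x hx
    simp only [List.mem_map, Function.comp] at hx
    obtain ⟨r, hr, rfl⟩ := hx
    simp only [eval_sub, eval_X, eval_C]
    have := h.2.2.1 r hr
    linarith
  have h2 : (([(0:ℝ)].map (eval (-1) ∘ fun r => X - C r))).prod = -1 := by
    simp
  rw [h2]
  nlinarith [h.1]



theorem neg_one_pow_list_prod (l : List ℝ) (h : ∀ x ∈ l, x < 0) :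
    0 < (-1 : ℝ) ^ l.length * l.prod := by
  induction l with
  | nil => simp
  | cons a t ih =>
    have ha := h a (by simp)
    have ht := ih (fun x hx => h x (by simp [hx]))
    simp only [List.length_cons, List.prod_cons, pow_succ]
    nlinarith [ht]

theorem eval_at_root {lc : ℝ} {M₁ M₂ : List ℝ} {r : ℝ} {f : Polynomial ℝ}
    (hf : f = C lc * ((M₁ ++ r :: M₂).map fun s => X - C s).prod) :
    f.eval r = 0 := by
  rw [hf, List.map_append, List.map_cons, List.prod_append, List.prod_cons]
  simp

theorem deriv_sign_at_root {f : Polynomial ℝ} {lc : ℝ} {M₁ M₂ : List ℝ} {r : ℝ}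
    (hlc : 0 < lc) (hpw : (M₁ ++ r :: M₂).Pairwise (· < ·))
    (hf : f = C lc * ((M₁ ++ r :: M₂).map fun s => X - C s).prod) :
    0 < (-1 : ℝ) ^ M₂.length * (derivative f).eval r := by
  have hM₁ : ∀ s ∈ M₁, s < r := by
    rw [List.pairwise_append] at hpw
    intro s hs
    exact hpw.2.2 s hs r (by simp)
  have hM₂ : ∀ s ∈ M₂, r < s := by
    rw [List.pairwise_append, List.pairwise_cons] at hpw
    intro s hs
    exact hpw.2.1.1 s hs
  set g : Polynomial ℝ := C lc * ((M₁ ++ M₂).map fun s => X - C s).prod with hg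
  have hfg : f = (X - C r) * g := by
    rw [hf, hg, List.map_append, List.map_cons, List.prod_append, List.prod_cons,
      List.map_append, List.prod_append]
    ring
  have hder : (derivative f).eval r = g.eval r := by
    rw [hfg, derivative_mul]
    simp
  rw [hder]
  have hgr : g.eval r
      = lc * ((M₁.map fun s => r - s).prod * (M₂.map fun s => r - s).prod) := by
    simp [hg, List.map_append, eval_list_prod, Function.comp_def]
  rw [hgr]
  have h1 : 0 < (M₁.map fun s => r - s).prod := by
    apply List.prod_pos
    intro x hx
    simp only [List.mem_map] at hx
    obtain ⟨s, hs, rfl⟩ := hx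
    have := hM₁ s hs; linarith
  have h2 : 0 < (-1 : ℝ) ^ M₂.length * (M₂.map fun s => r - s).prod := by
    have := neg_one_pow_list_prod (M₂.map fun s => r - s) ?_
    · simpa using this
    · intro x hx
      simp only [List.mem_map] at hx
      obtain ⟨s, hs, rfl⟩ := hx
      have := hM₂ s hs; linarith
  nlinarith [mul_pos hlc h1]

/-- Values of `F = (aX+b)f - c(X²+X)f'` at a root `r < -1` of `f`. -/
theorem F_sign_at_root {f F : Polynomial ℝ} {lc a b c : ℝ} {M₁ M₂ : List ℝ} {r : ℝ}
    (hlc : 0 < lc) (hc : 0 < c) (hr : r < -1)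
    (hpw : (M₁ ++ r :: M₂).Pairwise (· < ·))
    (hf : f = C lc * ((M₁ ++ r :: M₂).map fun s => X - C s).prod)
    (hF : F = (C a * X + C b) * f - C c * (X ^ 2 + X) * derivative f) :
    0 < (-1 : ℝ) ^ (M₂.length + 1) * F.eval r := by
  have h0 : f.eval r = 0 := eval_at_root hf
  have hd := deriv_sign_at_root hlc hpw hf
  have hFr : F.eval r = -(c * (r ^ 2 + r) * (derivative f).eval r) := by
    rw [hF]
    simp only [eval_sub, eval_mul, eval_add, eval_C, eval_X, eval_pow, h0]
    ring
  rw [hFr]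
  have hrr : 0 < r ^ 2 + r := by nlinarith
  rw [pow_succ]
  nlinarith [mul_pos (mul_pos hc hrr) hd]



theorem ladder (φ : ℝ → ℝ) (hφ : Continuous φ) (T : List ℝ) :
    T.Pairwise (· < ·) →
    (∀ T₁ x T₂, T = T₁ ++ x :: T₂ → 0 < (-1 : ℝ) ^ (T₂.length + 1) * φ x) →
    ∃ Z : List ℝ, List.Forall₂ (· < ·) T.dropLast Z ∧ List.Forall₂ (· < ·) Z T.tail ∧
      ∀ z ∈ Z, φ z = 0 := by
  induction T with
  | nil => exact fun _ _ => ⟨[], by simp, by simp, by simp⟩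
  | cons x T ih =>
    intro hpw hsgn
    cases T with
    | nil => exact ⟨[], by simp, by simp, by simp⟩
    | cons y T' =>
      have hxy : x < y := (List.pairwise_cons.mp hpw).1 y (by simp)
      have hx : 0 < (-1 : ℝ) ^ (T'.length + 2) * φ x := by
        have := hsgn [] x (y :: T') rfl
        simpa using this
      have hy : 0 < (-1 : ℝ) ^ (T'.length + 1) * φ y := hsgn [x] y T' rfl
      have hx' : 0 < (-1 : ℝ) ^ T'.length * φ x := by
        have : (-1 : ℝ) ^ (T'.length + 2) = (-1 : ℝ) ^ T'.length := by
          rw [pow_add]; norm_num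
        rwa [this] at hx
      have hcont : ContinuousOn φ (Set.Icc x y) := hφ.continuousOn
      have hz : ∃ z, x < z ∧ z < y ∧ φ z = 0 := by
        rcases Nat.even_or_odd T'.length with he | ho
        · -- φ x > 0, φ y < 0
          have h1 : 0 < φ x := by have := he.neg_one_pow (α := ℝ); rw [this] at hx'; linarith
          have h2 : φ y < 0 := by
            have h3 : (-1 : ℝ) ^ (T'.length + 1) = -1 := by
              rw [pow_succ, he.neg_one_pow]; norm_num
            rw [h3] at hy; linarith
          have : (0 : ℝ) ∈ Set.Ioo (φ y) (φ x) := ⟨h2, h1⟩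
          have := intermediate_value_Ioo' (le_of_lt hxy) hcont this
          obtain ⟨z, hz1, hz2⟩ := this
          exact ⟨z, hz1.1, hz1.2, hz2⟩
        · have h1 : φ x < 0 := by have := ho.neg_one_pow (α := ℝ); rw [this] at hx'; linarith
          have h2 : 0 < φ y := by
            have h3 : (-1 : ℝ) ^ (T'.length + 1) = 1 := by
              rw [pow_succ, ho.neg_one_pow]; norm_num
            rw [h3] at hy; linarith
          have : (0 : ℝ) ∈ Set.Ioo (φ x) (φ y) := ⟨h1, h2⟩
          have := intermediate_value_Ioo (le_of_lt hxy) hcont this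
          obtain ⟨z, hz1, hz2⟩ := this
          exact ⟨z, hz1.1, hz1.2, hz2⟩
      obtain ⟨z, hz1, hz2, hz3⟩ := hz
      obtain ⟨Z', hZ1, hZ2, hZ3⟩ := ih (List.pairwise_cons.mp hpw).2
        (fun T₁ x' T₂ heq => hsgn (x :: T₁) x' T₂ (by rw [heq]; rfl))
      refine ⟨z :: Z', ?_, ?_, ?_⟩
      · have : (x :: y :: T').dropLast = x :: (y :: T').dropLast := rfl
        rw [this]
        exact List.Forall₂.cons hz1 hZ1
      · exact List.Forall₂.cons hz2 (by simpa using hZ2)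
      · intro w hw
        rcases List.mem_cons.mp hw with h | h
        · rw [h]; exact hz3
        · exact hZ3 w h

theorem exists_left_point (F : Polynomial ℝ) (hdeg : 0 < F.natDegree)
    (hlc : 0 < F.leadingCoeff) (x₀ : ℝ) :
    ∃ R < x₀, 0 < (-1 : ℝ) ^ F.natDegree * F.eval R := by
  set n := F.natDegree with hn
  set G : Polynomial ℝ := C ((-1 : ℝ) ^ n) * F.comp (-X) with hG
  have hnegX : (-X : Polynomial ℝ).natDegree = 1 := by simp
  have hGlc : G.leadingCoeff = F.leadingCoeff := by
    rw [hG, leadingCoeff_mul, leadingCoeff_C, leadingCoeff_comp (by rw [hnegX]; norm_num)]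
    have : (-X : Polynomial ℝ).leadingCoeff = -1 := by simp
    rw [this, ← hn]
    have h2 : ((-1 : ℝ) ^ n) * ((-1 : ℝ) ^ n) = 1 := by
      rw [← pow_add]
      exact Even.neg_one_pow ⟨n, by ring⟩
    nlinarith [h2]
  have hGdeg : G.natDegree = n := by
    rw [hG, natDegree_C_mul (pow_ne_zero _ (by norm_num : (-1:ℝ) ≠ 0)), natDegree_comp,
      hnegX, mul_one]
  have htend : Tendsto (fun x => eval x G) atTop atTop := by
    apply tendsto_atTop_of_leadingCoeff_nonneg
    · rw [← natDegree_pos_iff_degree_pos, hGdeg]; exact hdeg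
    · rw [hGlc]; exact le_of_lt hlc
  have h1 := htend.eventually_gt_atTop 0
  have h2 : ∀ᶠ x : ℝ in atTop, -x₀ < x := eventually_gt_atTop _
  obtain ⟨t, ht1, ht2⟩ := (h1.and h2).exists
  refine ⟨-t, by linarith, ?_⟩
  have : eval t G = (-1 : ℝ) ^ n * F.eval (-t) := by
    rw [hG, eval_mul, eval_C, eval_comp]
    simp
  rw [← this]
  exact ht1



/-! ### Coefficients of `F = (aX+b)f - c(X²+X)f'` -/

theorem coeff_comb (f : Polynomial ℝ) (a b c : ℝ) (k : ℕ) :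
    (((C a * X + C b) * f - C c * (X ^ 2 + X) * derivative f)).coeff (k + 2)
      = (a - c * (k + 1)) * f.coeff (k + 1) + (b - c * (k + 2)) * f.coeff (k + 2) := by
  have h1 : ((C a * X + C b) * f).coeff (k + 2)
      = a * f.coeff (k + 1) + b * f.coeff (k + 2) := by
    rw [add_mul, mul_assoc, coeff_add, coeff_C_mul, coeff_C_mul, coeff_X_mul]
  have h2 : (C c * (X ^ 2 + X) * derivative f).coeff (k + 2)
      = c * ((k + 1) * f.coeff (k + 1) + (k + 2) * f.coeff (k + 2)) := by
    rw [mul_assoc, coeff_C_mul, add_mul, coeff_add]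
    rw [show (X ^ 2 : Polynomial ℝ) = X * X by ring, mul_assoc, coeff_X_mul, coeff_X_mul,
      coeff_X_mul, coeff_derivative, coeff_derivative]
    push_cast; ring
  rw [coeff_sub, h1, h2]; push_cast; ring

theorem coeff_comb_one (f : Polynomial ℝ) (a b c : ℝ) :
    (((C a * X + C b) * f - C c * (X ^ 2 + X) * derivative f)).coeff 1
      = a * f.coeff 0 + (b - c) * f.coeff 1 := by
  have h1 : ((C a * X + C b) * f).coeff 1 = a * f.coeff 0 + b * f.coeff 1 := by
    rw [add_mul, mul_assoc, coeff_add, coeff_C_mul, coeff_C_mul,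
      show (1:ℕ) = 0 + 1 from rfl, coeff_X_mul]
  have h2 : (C c * (X ^ 2 + X) * derivative f).coeff 1 = c * f.coeff 1 := by
    rw [mul_assoc, coeff_C_mul, add_mul, coeff_add]
    rw [show (X ^ 2 : Polynomial ℝ) = X * X by ring, mul_assoc,
      show (1:ℕ) = 0 + 1 from rfl, coeff_X_mul, coeff_X_mul]
    have : (X * derivative f).coeff 0 = 0 := by
      rw [mul_comm, Polynomial.coeff_mul_X_zero]
    rw [this, coeff_derivative]
    push_cast; ring
  rw [coeff_sub, h1, h2]; ring

theorem coeff_comb_zero (f : Polynomial ℝ) (a b c : ℝ) :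
    (((C a * X + C b) * f - C c * (X ^ 2 + X) * derivative f)).coeff 0
      = b * f.coeff 0 := by
  have h1 : ((C a * X + C b) * f).coeff 0 = b * f.coeff 0 := by
    rw [add_mul, mul_assoc, coeff_add, coeff_C_mul, coeff_C_mul, mul_comm X f,
      Polynomial.coeff_mul_X_zero]
    ring
  have h2 : (C c * (X ^ 2 + X) * derivative f).coeff 0 = 0 := by
    rw [mul_assoc, coeff_C_mul, add_mul, coeff_add]
    rw [show (X ^ 2 : Polynomial ℝ) = X * X by ring, mul_assoc, mul_comm X (X * derivative f),
      Polynomial.coeff_mul_X_zero, mul_comm X (derivative f), Polynomial.coeff_mul_X_zero]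
    ring
  rw [coeff_sub, h1, h2]; ring

theorem natDegree_comb_le (f : Polynomial ℝ) (a b c : ℝ) (k : ℕ) (h : f.natDegree ≤ k + 1) :
    (((C a * X + C b) * f - C c * (X ^ 2 + X) * derivative f)).natDegree ≤ k + 2 := by
  apply le_trans (natDegree_sub_le _ _)
  apply max_le
  · apply le_trans (natDegree_mul_le)
    have h1 : (C a * X + C b).natDegree ≤ 1 := by
      apply le_trans (natDegree_add_le _ _)
      simp [natDegree_C_mul_le]
      exact le_trans (natDegree_C_mul_le a X) (by simp)
    omega
  · apply le_trans (natDegree_mul_le)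
    have h1 : (C c * (X ^ 2 + X)).natDegree ≤ 2 := by
      apply le_trans (natDegree_C_mul_le _ _)
      apply le_trans (natDegree_add_le _ _)
      simp [natDegree_X_pow]
    have h2 : (derivative f).natDegree ≤ k := by
      have := natDegree_derivative_le f
      omega
    omega

/-! ### List helpers -/

theorem getD_append_zero (A : List ℝ) (i : ℕ) :
    (A ++ [(0:ℝ)]).getD i 0 = A.getD i 0 := by
  rcases lt_or_ge i A.length with h | h
  · rw [List.getD_append _ _ _ _ h]
  · rw [List.getD_append_right _ _ _ _ h, List.getD_eq_default _ _ h]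
    rcases Nat.eq_or_lt_of_le h with h' | h'
    · simp [← h']
    · rw [List.getD_eq_default]
      simp; omega

theorem forall₂_getD_le {A B : List ℝ} (h : List.Forall₂ (· < ·) A B) :
    ∀ i, A.getD i 0 ≤ B.getD i 0 := by
  induction h with
  | nil => intro i; simp
  | cons hab _ ih =>
    intro i
    cases i with
    | zero => simpa using le_of_lt hab
    | succ j => simpa using ih j

theorem forall₂_exists_left {A B : List ℝ} (h : List.Forall₂ (· < ·) A B) :
    ∀ b ∈ B, ∃ a ∈ A, a < b := by
  induction h with
  | nil => simp
  | cons hab _ ih =>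
    intro b hb
    rcases List.mem_cons.mp hb with rfl | hb'
    · exact ⟨_, by simp, hab⟩
    · obtain ⟨x, hx, hxb⟩ := ih b hb'
      exact ⟨x, by simp [hx], hxb⟩

theorem interleave_pairwise : ∀ (l Z : List ℝ), l.Pairwise (· < ·) →
    List.Forall₂ (· < ·) l.dropLast Z → List.Forall₂ (· < ·) Z l.tail →
    Z.Pairwise (· < ·) := by
  intro l Z
  induction Z generalizing l with
  | nil => intro _ _ _; exact List.Pairwise.nil
  | cons z Z' ih =>
    intro hpw h1 h2
    -- l must have at least two elements
    match l, h1, h2 with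
    | x :: y :: l', h1, h2 =>
      have h1' := h1
      rw [show (x :: y :: l').dropLast = x :: (y :: l').dropLast from rfl] at h1'
      rcases h1' with _ | ⟨hxz, h1t⟩
      rcases h2 with _ | ⟨hzy, h2t⟩
      have hpw' := (List.pairwise_cons.mp hpw).2
      constructor
      · intro w hw
        obtain ⟨p, hp, hpw2⟩ := forall₂_exists_left h1t w hw
        have hyp : y ≤ p := by
          have : p ∈ y :: l' := List.dropLast_subset _ hp
          rcases List.mem_cons.mp this with rfl | hpl
          · exact le_refl _
          · exact le_of_lt ((List.pairwise_cons.mp hpw').1 p hpl)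
        linarith
      · exact ih (y :: l') hpw' h1t h2t

theorem tail_getD_le (L : List ℝ) (i : ℕ) :
    ((L ++ [(-1:ℝ)]).tail).getD i 0 ≤ L.getD (i + 1) 0 := by
  cases L with
  | nil => simp
  | cons x L' =>
    rw [show ((x :: L') ++ [(-1:ℝ)]).tail = L' ++ [(-1:ℝ)] from rfl, List.getD_cons_succ]
    rcases lt_or_ge i L'.length with h | h
    · rw [List.getD_append _ _ _ _ h]
    · rw [List.getD_eq_default _ _ h]
      rcases Nat.eq_or_lt_of_le h with h' | h'
      · rw [List.getD_append_right _ _ _ _ h, ← h']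
        simp
      · rw [List.getD_append_right _ _ _ _ h, List.getD_eq_default]
        · simp; omega



theorem forall₂_exists_right {A B : List ℝ} (h : List.Forall₂ (· < ·) A B) :
    ∀ a ∈ A, ∃ b ∈ B, a < b := by
  induction h with
  | nil => simp
  | cons hab _ ih =>
    intro a ha
    rcases List.mem_cons.mp ha with rfl | ha'
    · exact ⟨_, by simp, hab⟩
    · obtain ⟨y, hy, hay⟩ := ih a ha'
      exact ⟨y, by simp [hy], hay⟩

theorem eval_comb_neg_one (f : Polynomial ℝ) (a b c : ℝ) :
    ((C a * X + C b) * f - C c * (X ^ 2 + X) * derivative f).eval (-1)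
      = (b - a) * f.eval (-1) := by
  simp only [eval_sub, eval_mul, eval_add, eval_C, eval_X, eval_pow]
  ring

theorem prod_neg_one_sub_pos (Z : List ℝ) (hZ : ∀ z ∈ Z, z < -1) :
    0 < (Z.map fun r => -1 - r).prod := by
  apply List.prod_pos
  intro x hx
  simp only [List.mem_map] at hx
  obtain ⟨r, hr, rfl⟩ := hx
  have := hZ r hr; linarith

theorem eval_neg_one_eq (t : ℝ) (Z : List ℝ) :
    (C t * ((Z ++ [(0:ℝ)]).map fun r => X - C r).prod).eval (-1)
      = -(t * (Z.map fun r => -1 - r).prod) := by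
  simp only [eval_mul, eval_C, eval_list_prod, List.map_append, List.map_map,
    List.prod_append]
  simp only [Function.comp_def, eval_sub, eval_X, eval_C, List.map_cons, List.map_nil,
    List.prod_cons, List.prod_nil]
  ring

theorem lc_pos_of_neg_eval {t : ℝ} {Z : List ℝ} {F : Polynomial ℝ}
    (hZ : ∀ z ∈ Z, z < -1)
    (hfact : F = C t * ((Z ++ [(0:ℝ)]).map fun r => X - C r).prod)
    (hneg : F.eval (-1) < 0) : 0 < t := by
  rw [hfact, eval_neg_one_eq] at hneg
  have := prod_neg_one_sub_pos Z hZ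
  nlinarith

theorem sign_hyp {f F : Polynomial ℝ} {lc a b c : ℝ} {L : List ℝ}
    (hd : RootData f lc L) (hc : 0 < c) (hab : a < b)
    (hF : F = (C a * X + C b) * f - C c * (X ^ 2 + X) * derivative f) :
    ∀ T₁ x T₂, L ++ [(-1:ℝ)] = T₁ ++ x :: T₂ →
      0 < (-1 : ℝ) ^ (T₂.length + 1) * F.eval x := by
  intro T₁ x T₂ heq
  rcases List.eq_nil_or_concat T₂ with rfl | ⟨T₂', z, rfl⟩
  · obtain ⟨rfl, hx⟩ := List.append_inj' heq rfl
    obtain rfl : x = -1 := by simpa using hx.symm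
    have hev : F.eval (-1) = (b - a) * f.eval (-1) := by rw [hF]; exact eval_comb_neg_one f a b c
    have hneg := hd.eval_neg_one_neg
    simp only [List.length_nil, zero_add, pow_one, hev]
    nlinarith
  · have heq' : L ++ [(-1:ℝ)] = (T₁ ++ x :: T₂') ++ [z] := by
      rw [heq]; simp [List.concat_eq_append]
    obtain ⟨hL, hz⟩ := List.append_inj' heq' rfl
    obtain rfl : z = -1 := by simpa using hz.symm
    have hx_mem : x ∈ L := by rw [hL]; simp
    have hxlt : x < -1 := hd.2.2.1 x hx_mem
    have hsplit : L ++ [(0:ℝ)] = T₁ ++ x :: (T₂' ++ [(0:ℝ)]) := by rw [hL]; simp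
    have hpw : (T₁ ++ x :: (T₂' ++ [(0:ℝ)])).Pairwise (· < ·) := by
      rw [← hsplit]; exact hd.sorted
    have hffact : f = C lc * ((T₁ ++ x :: (T₂' ++ [(0:ℝ)])).map fun s => X - C s).prod := by
      rw [← hsplit]; exact hd.2.2.2
    have := F_sign_at_root hd.1 hc hxlt hpw hffact hF
    have hlen : (T₂' ++ [(0:ℝ)]).length + 1 = (T₂'.concat (-1)).length + 1 := by
      simp [List.concat_eq_append]
    rw [hlen] at this
    exact this

/-- Equal-degree step. -/
theorem step_equal {f : Polynomial ℝ} {lc a b c : ℝ} {L : List ℝ}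
    (hd : RootData f lc L) (hc : 0 < c) (hab : a < b)
    (heq : a = c * ((L.length : ℝ) + 1)) :
    ∃ Z, RootData ((C a * X + C b) * f - C c * (X ^ 2 + X) * derivative f)
        ((C a * X + C b) * f - C c * (X ^ 2 + X) * derivative f).leadingCoeff Z
      ∧ Z.length = L.length
      ∧ Interlaces f ((C a * X + C b) * f - C c * (X ^ 2 + X) * derivative f) := by
  set F : Polynomial ℝ := (C a * X + C b) * f - C c * (X ^ 2 + X) * derivative f with hF
  set k := L.length with hk
  have hT_pw : (L ++ [(-1:ℝ)]).Pairwise (· < ·) := by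
    rw [List.pairwise_append]
    exact ⟨hd.2.1, List.pairwise_singleton _ _,
      fun x hx y hy => by simp only [List.mem_singleton] at hy; subst hy; exact hd.2.2.1 x hx⟩
  obtain ⟨Z, h1, h2, h3⟩ := ladder (fun x => F.eval x) F.continuous (L ++ [(-1:ℝ)]) hT_pw
    (sign_hyp hd hc hab hF)
  rw [List.dropLast_concat] at h1
  have hZlen : Z.length = k := h1.length_eq.symm
  have hTle : ∀ x ∈ L ++ [(-1:ℝ)], x ≤ -1 := by
    intro x hx
    rcases List.mem_append.mp hx with h | h
    · exact le_of_lt (hd.2.2.1 x h)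
    · simp only [List.mem_singleton] at h; simp [h]
  have hZlt : ∀ z ∈ Z, z < -1 := by
    intro z hz
    obtain ⟨p, hp, hzp⟩ := forall₂_exists_right h2 z hz
    have : p ≤ -1 := hTle p (List.tail_subset _ hp)
    linarith
  have hZpw : Z.Pairwise (· < ·) := interleave_pairwise (L ++ [(-1:ℝ)]) Z hT_pw
    (by rw [List.dropLast_concat]; exact h1) h2
  have hF0 : F.eval 0 = 0 := by
    rw [← coeff_zero_eq_eval_zero, hF, coeff_comb_zero, coeff_zero_eq_eval_zero, hd.eval_zero,
      mul_zero]
  have hFneg1 : F.eval (-1) < 0 := by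
    rw [hF, eval_comb_neg_one]
    have := hd.eval_neg_one_neg
    nlinarith
  have hFne : F ≠ 0 := by
    intro h; rw [h] at hFneg1; simp at hFneg1
  have hfdeg : f.natDegree = k + 1 := hd.natDegree_eq
  have hdegle : F.natDegree ≤ k + 1 := by
    rw [natDegree_le_iff_coeff_eq_zero]
    intro N hN
    have hdg2 : F.natDegree ≤ k + 2 := natDegree_comb_le f a b c k (by omega)
    by_cases hNk : N = k + 2
    · subst hNk
      rw [hF, coeff_comb]
      have hz1 : f.coeff (k + 2) = 0 := coeff_eq_zero_of_natDegree_lt (by omega)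
      have hz2 : a - c * ((k:ℝ) + 1) = 0 := by rw [heq]; push_cast; ring
      rw [hz1]
      push_cast
      rw [show ((k:ℝ) + 1) = ((k:ℝ) + 1) from rfl] at hz2
      rw [hz2]; ring
    · exact coeff_eq_zero_of_natDegree_lt (by omega)
  have hmemroots : ∀ r ∈ Z ++ [(0:ℝ)], r ∈ F.roots := by
    intro r hr
    rw [mem_roots hFne]
    rcases List.mem_append.mp hr with h | h
    · exact h3 r h
    · simp only [List.mem_singleton] at h; subst h; exact hF0
  have hZ0pw : (Z ++ [(0:ℝ)]).Pairwise (· < ·) := by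
    rw [List.pairwise_append]
    exact ⟨hZpw, List.pairwise_singleton _ _,
      fun x hx y hy => by
        simp only [List.mem_singleton] at hy; subst hy
        linarith [hZlt x hx]⟩
  have hnodup : (Z ++ [(0:ℝ)]).Nodup := hZ0pw.nodup
  have hsub : (↑(Z ++ [(0:ℝ)]) : Multiset ℝ) ≤ F.roots :=
    (Multiset.le_iff_subset (by rwa [Multiset.coe_nodup])).mpr
      (fun r hr => hmemroots r (by simpa using hr))
  have hcard1 : Multiset.card (↑(Z ++ [(0:ℝ)]) : Multiset ℝ) = k + 1 := by simp [hZlen]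
  have hcard2 : Multiset.card F.roots ≤ k + 1 := le_trans F.card_roots' hdegle
  have hrootseq : F.roots = (↑(Z ++ [(0:ℝ)]) : Multiset ℝ) :=
    (Multiset.eq_of_le_of_card_le hsub (by rw [hcard1]; exact hcard2)).symm
  have hdegF : F.natDegree = k + 1 := by
    refine le_antisymm hdegle ?_
    have : Multiset.card F.roots = k + 1 := by rw [hrootseq]; exact hcard1
    rw [← this]; exact F.card_roots'
  have hRR : RealRooted F := by unfold RealRooted; rw [hrootseq, hcard1, hdegF]
  have hfact : F = C F.leadingCoeff * ((Z ++ [(0:ℝ)]).map fun r => X - C r).prod := by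
    have h := C_leadingCoeff_mul_prod_multiset_X_sub_C (p := F)
      (by rw [hrootseq, hcard1, hdegF])
    rw [hrootseq] at h
    exact h.symm
  have hlcF : 0 < F.leadingCoeff := lc_pos_of_neg_eval hZlt hfact hFneg1
  have hrd : RootData F F.leadingCoeff Z := ⟨hlcF, hZpw, hZlt, hfact⟩
  refine ⟨Z, hrd, hZlen, hd.realRooted, hRR, Or.inr (Or.inr (Or.inl ⟨?_, ?_, ?_⟩))⟩
  · rw [hdegF, hfdeg]
  · intro i hi
    rw [hd.ascRoots_eq, hrd.ascRoots_eq, getD_append_zero, getD_append_zero]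
    exact forall₂_getD_le h1 i
  · intro i hi
    rw [hd.ascRoots_eq, hrd.ascRoots_eq, getD_append_zero, getD_append_zero]
    exact le_trans (forall₂_getD_le h2 i) (tail_getD_le L i)
/-- Degree-raising step. -/
theorem step_raise {f : Polynomial ℝ} {lc a b c : ℝ} {L : List ℝ}
    (hd : RootData f lc L) (hc : 0 < c) (hab : a < b)
    (hlt : c * ((L.length : ℝ) + 1) < a) :
    ∃ w Z, RootData ((C a * X + C b) * f - C c * (X ^ 2 + X) * derivative f)
        ((C a * X + C b) * f - C c * (X ^ 2 + X) * derivative f).leadingCoeff (w :: Z)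
      ∧ Z.length = L.length
      ∧ Interlaces f ((C a * X + C b) * f - C c * (X ^ 2 + X) * derivative f) := by
  set F : Polynomial ℝ := (C a * X + C b) * f - C c * (X ^ 2 + X) * derivative f with hF
  set k := L.length with hk
  have hT_pw : (L ++ [(-1:ℝ)]).Pairwise (· < ·) := by
    rw [List.pairwise_append]
    exact ⟨hd.2.1, List.pairwise_singleton _ _,
      fun x hx y hy => by simp only [List.mem_singleton] at hy; subst hy; exact hd.2.2.1 x hx⟩
  have hsgn := sign_hyp hd hc hab hF
  obtain ⟨Z, h1, h2, h3⟩ := ladder (fun x => F.eval x) F.continuous (L ++ [(-1:ℝ)]) hT_pw hsgn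
  rw [List.dropLast_concat] at h1
  have hZlen : Z.length = k := h1.length_eq.symm
  have hTle : ∀ x ∈ L ++ [(-1:ℝ)], x ≤ -1 := by
    intro x hx
    rcases List.mem_append.mp hx with h | h
    · exact le_of_lt (hd.2.2.1 x h)
    · simp only [List.mem_singleton] at h; simp [h]
  have hZlt : ∀ z ∈ Z, z < -1 := by
    intro z hz
    obtain ⟨p, hp, hzp⟩ := forall₂_exists_right h2 z hz
    have : p ≤ -1 := hTle p (List.tail_subset _ hp)
    linarith
  have hZpw : Z.Pairwise (· < ·) := interleave_pairwise (L ++ [(-1:ℝ)]) Z hT_pw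
    (by rw [List.dropLast_concat]; exact h1) h2
  have hF0 : F.eval 0 = 0 := by
    rw [← coeff_zero_eq_eval_zero, hF, coeff_comb_zero, coeff_zero_eq_eval_zero, hd.eval_zero,
      mul_zero]
  have hFneg1 : F.eval (-1) < 0 := by
    rw [hF, eval_comb_neg_one]
    have := hd.eval_neg_one_neg
    nlinarith
  have hFne : F ≠ 0 := by
    intro h; rw [h] at hFneg1; simp at hFneg1
  have hfdeg : f.natDegree = k + 1 := hd.natDegree_eq
  -- top coefficient
  have hflc : f.coeff (k + 1) = lc := by
    have := hd.leadingCoeff_eq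
    rw [← this, ← hfdeg]; exact coeff_natDegree
  have htop : F.coeff (k + 2) = (a - c * ((k : ℝ) + 1)) * lc := by
    rw [hF, coeff_comb]
    have hz1 : f.coeff (k + 2) = 0 := coeff_eq_zero_of_natDegree_lt (by omega)
    rw [hz1, hflc]
    push_cast; ring
  have htopne : F.coeff (k + 2) ≠ 0 := by
    rw [htop]
    have h' : 0 < a - c * ((k : ℝ) + 1) := by linarith
    exact ne_of_gt (mul_pos h' hd.1)
  have hdegle : F.natDegree ≤ k + 2 := natDegree_comb_le f a b c k (by omega)
  have hdegF : F.natDegree = k + 2 := le_antisymm hdegle (le_natDegree_of_ne_zero htopne)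
  have hlcF : 0 < F.leadingCoeff := by
    have : F.leadingCoeff = F.coeff (k + 2) := by rw [← hdegF]; exact coeff_natDegree.symm
    rw [this, htop]
    have : 0 < a - c * ((k : ℝ) + 1) := by linarith
    exact mul_pos this hd.1
  -- extra root to the left
  set t₀ : ℝ := (L ++ [(-1:ℝ)]).head (by simp) with ht₀
  have hhead : (L ++ [(-1:ℝ)]) = [] ++ t₀ :: (L ++ [(-1:ℝ)]).tail := by
    simp [ht₀]
  have htail_len : (L ++ [(-1:ℝ)]).tail.length = k := by
    have h' : (L ++ [(-1:ℝ)]).length = k + 1 := by simp [hk]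
    rw [List.length_tail, h']
    omega
  have ht₀sgn : 0 < (-1 : ℝ) ^ (k + 1) * F.eval t₀ := by
    have := hsgn [] t₀ _ hhead
    rwa [htail_len] at this
  obtain ⟨R, hR, hRsgn⟩ := exists_left_point F (by omega) hlcF t₀
  rw [hdegF] at hRsgn
  have hw : ∃ w, R < w ∧ w < t₀ ∧ F.eval w = 0 := by
    have hcont : ContinuousOn (fun x => F.eval x) (Set.Icc R t₀) := F.continuous.continuousOn
    rcases Nat.even_or_odd k with he | ho
    · -- (-1)^(k+1) = -1 : F t₀ < 0 ; (-1)^(k+2) = 1 : F R > 0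
      have hA : F.eval t₀ < 0 := by
        have h3 : (-1 : ℝ) ^ (k + 1) = -1 := by rw [pow_succ, he.neg_one_pow]; norm_num
        rw [h3] at ht₀sgn; linarith
      have hB : 0 < F.eval R := by
        have h3 : (-1 : ℝ) ^ (k + 2) = 1 := by
          rw [pow_add, he.neg_one_pow]; norm_num
        rw [h3] at hRsgn; linarith
      have hmem : (0:ℝ) ∈ Set.Ioo (F.eval t₀) (F.eval R) := ⟨hA, hB⟩
      obtain ⟨w, hw1, hw2⟩ := intermediate_value_Ioo' (le_of_lt hR) hcont hmem
      exact ⟨w, hw1.1, hw1.2, hw2⟩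
    · have hA : 0 < F.eval t₀ := by
        have h3 : (-1 : ℝ) ^ (k + 1) = 1 := by rw [pow_succ, ho.neg_one_pow]; norm_num
        rw [h3] at ht₀sgn; linarith
      have hB : F.eval R < 0 := by
        have h3 : (-1 : ℝ) ^ (k + 2) = -1 := by
          rw [pow_add, ho.neg_one_pow]; norm_num
        rw [h3] at hRsgn; linarith
      have hmem : (0:ℝ) ∈ Set.Ioo (F.eval R) (F.eval t₀) := ⟨hB, hA⟩
      obtain ⟨w, hw1, hw2⟩ := intermediate_value_Ioo (le_of_lt hR) hcont hmem
      exact ⟨w, hw1.1, hw1.2, hw2⟩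
  obtain ⟨w, hRw, hwt₀, hweval⟩ := hw
  have ht₀le : t₀ ≤ -1 := hTle t₀ (List.head_mem _)
  have hwlt : w < -1 := lt_of_lt_of_le hwt₀ ht₀le
  have hwL : ∀ r ∈ L, w < r := by
    intro r hr
    cases L with
    | nil => simp at hr
    | cons x L' =>
      have ht₀x : t₀ = x := by simp [ht₀]
      rcases List.mem_cons.mp hr with rfl | hr'
      · rw [← ht₀x]; exact hwt₀
      · have : x < r := (List.pairwise_cons.mp hd.2.1).1 r hr'
        rw [← ht₀x] at this; linarith
  have hwZ : ∀ z ∈ Z, w < z := by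
    intro z hz
    obtain ⟨p, hp, hpz⟩ := forall₂_exists_left h1 z hz
    linarith [hwL p hp]
  have hwZpw : (w :: Z).Pairwise (· < ·) := List.pairwise_cons.mpr ⟨hwZ, hZpw⟩
  have hwZlt : ∀ z ∈ w :: Z, z < -1 := by
    intro z hz
    rcases List.mem_cons.mp hz with rfl | hz'
    · exact hwlt
    · exact hZlt z hz'
  -- roots
  have hmemroots : ∀ r ∈ (w :: Z) ++ [(0:ℝ)], r ∈ F.roots := by
    intro r hr
    rw [mem_roots hFne]
    rcases List.mem_append.mp hr with h | h
    · rcases List.mem_cons.mp h with rfl | h'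
      · exact hweval
      · exact h3 r h'
    · simp only [List.mem_singleton] at h; subst h; exact hF0
  have hZ0pw : ((w :: Z) ++ [(0:ℝ)]).Pairwise (· < ·) := by
    rw [List.pairwise_append]
    exact ⟨hwZpw, List.pairwise_singleton _ _,
      fun x hx y hy => by
        simp only [List.mem_singleton] at hy; subst hy
        linarith [hwZlt x hx]⟩
  have hsub : (↑((w :: Z) ++ [(0:ℝ)]) : Multiset ℝ) ≤ F.roots :=
    (Multiset.le_iff_subset (by rw [Multiset.coe_nodup]; exact hZ0pw.nodup)).mpr
      (fun r hr => hmemroots r (by simpa using hr))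
  have hcard1 : Multiset.card (↑((w :: Z) ++ [(0:ℝ)]) : Multiset ℝ) = k + 2 := by simp [hZlen]
  have hcard2 : Multiset.card F.roots ≤ k + 2 := by
    rw [← hdegF]; exact F.card_roots'
  have hrootseq : F.roots = (↑((w :: Z) ++ [(0:ℝ)]) : Multiset ℝ) :=
    (Multiset.eq_of_le_of_card_le hsub (by rw [hcard1]; exact hcard2)).symm
  have hRR : RealRooted F := by unfold RealRooted; rw [hrootseq, hcard1, hdegF]
  have hfact : F = C F.leadingCoeff * (((w :: Z) ++ [(0:ℝ)]).map fun r => X - C r).prod := by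
    have h := C_leadingCoeff_mul_prod_multiset_X_sub_C (p := F)
      (by rw [hrootseq, hcard1, hdegF])
    rw [hrootseq] at h
    exact h.symm
  have hrd : RootData F F.leadingCoeff (w :: Z) := ⟨hlcF, hwZpw, hwZlt, hfact⟩
  refine ⟨w, Z, hrd, hZlen, hd.realRooted, hRR, Or.inr (Or.inr (Or.inr ⟨?_, ?_, ?_⟩))⟩
  · rw [hdegF, hfdeg]
  · intro i hi
    rw [hd.ascRoots_eq, hrd.ascRoots_eq, getD_append_zero, getD_append_zero]
    cases i with
    | zero =>
      rw [List.getD_cons_zero]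
      cases L with
      | nil => simp; linarith
      | cons x L' =>
        have ht₀x : t₀ = x := by simp [ht₀]
        rw [List.getD_cons_zero, ← ht₀x]
        exact le_of_lt hwt₀
    | succ j =>
      rw [List.getD_cons_succ]
      exact le_trans (forall₂_getD_le h2 j) (tail_getD_le L j)
  · intro i hi
    rw [hd.ascRoots_eq, hrd.ascRoots_eq, getD_append_zero, getD_append_zero,
      List.getD_cons_succ]
    exact forall₂_getD_le h1 i
theorem gPoly_coeff (n d j : ℕ) :
    (gPoly n d).coeff j = if 1 ≤ j ∧ j ≤ min d (n - d) then
      (Nat.factorial (n - j - 1) : ℝ) /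
        ((Nat.factorial (d - j) : ℝ) * (Nat.factorial (n - d - j) : ℝ) *
          (Nat.factorial (j - 1) : ℝ)) else 0 := by
  unfold gPoly
  rw [finset_sum_coeff]
  simp only [coeff_C_mul, coeff_X_pow, mul_ite, mul_one, mul_zero]
  rw [Finset.sum_ite_eq (Finset.Icc 1 (min d (n - d))) j]
  simp [Finset.mem_Icc]

theorem coeff_gG (d j : ℕ) :
    (gPoly (2 * d) d).coeff j = if 1 ≤ j ∧ j ≤ d then
      (Nat.factorial (2 * d - j - 1) : ℝ) /
        ((Nat.factorial (d - j) : ℝ) * (Nat.factorial (d - j) : ℝ) *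
          (Nat.factorial (j - 1) : ℝ)) else 0 := by
  rw [gPoly_coeff]
  have h1 : min d (2 * d - d) = d := by omega
  have h2 : 2 * d - d - j = d - j := by omega
  rw [h1, h2]

theorem coeff_gH (d j : ℕ) :
    (gPoly (2 * d + 1) d).coeff j = if 1 ≤ j ∧ j ≤ d then
      (Nat.factorial (2 * d - j) : ℝ) /
        ((Nat.factorial (d - j) : ℝ) * (Nat.factorial (d + 1 - j) : ℝ) *
          (Nat.factorial (j - 1) : ℝ)) else 0 := by
  rw [gPoly_coeff]
  have h1 : min d (2 * d + 1 - d) = d := by omega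
  have h2 : 2 * d + 1 - d - j = d + 1 - j := by omega
  have h3 : 2 * d + 1 - j - 1 = 2 * d - j := by omega
  rw [h1, h2, h3]

theorem fact_cast_ne (n : ℕ) : (Nat.factorial n : ℝ) ≠ 0 := by
  exact_mod_cast Nat.factorial_ne_zero n

theorem fact_add_one (n : ℕ) : (Nat.factorial (n + 1) : ℝ) = ((n : ℝ) + 1) * Nat.factorial n := by
  rw [Nat.factorial_succ]; push_cast; ring

/-- R3 : `d • g_{2d+2,d+1} = (3d t + 4d) g_{2d,d} - 2(t²+t) g_{2d,d}'`. -/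
theorem recG (d : ℕ) (hd : 1 ≤ d) :
    C (d : ℝ) * gPoly (2 * (d + 1)) (d + 1)
      = (C (3 * (d : ℝ)) * X + C (4 * (d : ℝ))) * gPoly (2 * d) d
        - C 2 * (X ^ 2 + X) * derivative (gPoly (2 * d) d) := by
  ext j
  rw [coeff_C_mul]
  match j with
  | 0 =>
    rw [coeff_comb_zero, coeff_gG, coeff_gG, if_neg (by omega), if_neg (by omega)]
    ring
  | 1 =>
    rw [coeff_comb_one, coeff_gG, coeff_gG, coeff_gG]
    rw [if_pos (by omega : 1 ≤ 1 ∧ 1 ≤ d + 1), if_neg (by omega), if_pos ⟨le_refl 1, hd⟩]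
    obtain ⟨e, rfl⟩ : ∃ e, d = e + 1 := ⟨d - 1, by omega⟩
    rw [show 2 * (e + 1 + 1) - 1 - 1 = 2 * e + 2 by omega,
      show e + 1 + 1 - 1 = e + 1 by omega,
      show 2 * (e + 1) - 1 - 1 = 2 * e by omega,
      show e + 1 - 1 = e by omega]
    rw [show 2 * e + 2 = (2 * e + 1) + 1 by omega, fact_add_one,
      show 2 * e + 1 = (2 * e) + 1 by omega, fact_add_one, fact_add_one e]
    have hA := fact_cast_ne (2 * e)
    have hB := fact_cast_ne e
    have hC := fact_cast_ne 0
    push_cast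
    field_simp
    ring
  | (j + 2) =>
    rw [coeff_comb, coeff_gG, coeff_gG, coeff_gG]
    split_ifs with h1 h2 h3 h2 h3 h3
    · -- interior : j+2 ≤ d
      obtain ⟨q, rfl⟩ : ∃ q, d = j + 2 + q := ⟨d - (j + 2), by omega⟩
      rw [show 2 * (j + 2 + q + 1) - (j + 2) - 1 = j + 2 * q + 3 by omega,
        show j + 2 + q + 1 - (j + 2) = q + 1 by omega,
        show 2 * (j + 2 + q) - (j + 1) - 1 = j + 2 * q + 2 by omega,
        show j + 2 + q - (j + 1) = q + 1 by omega,
        show 2 * (j + 2 + q) - (j + 2) - 1 = j + 2 * q + 1 by omega,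
        show j + 2 + q - (j + 2) = q by omega,
        show j + 2 - 1 = j + 1 by omega,
        show j + 1 - 1 = j by omega]
      rw [show j + 2 * q + 3 = (j + 2 * q + 2) + 1 by omega, fact_add_one,
        show j + 2 * q + 2 = (j + 2 * q + 1) + 1 by omega, fact_add_one,
        fact_add_one q, fact_add_one j]
      have hA := fact_cast_ne (j + 2 * q + 1)
      have hB := fact_cast_ne q
      have hC := fact_cast_ne j
      push_cast
      field_simp
      ring
    · -- top : j + 2 = d + 1
      obtain rfl : d = j + 1 := by omega
      rw [show 2 * (j + 1 + 1) - (j + 2) - 1 = j + 1 by omega,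
        show j + 1 + 1 - (j + 2) = 0 by omega,
        show 2 * (j + 1) - (j + 1) - 1 = j by omega,
        show j + 1 - (j + 1) = 0 by omega,
        show j + 2 - 1 = j + 1 by omega,
        show j + 1 - 1 = j by omega]
      rw [fact_add_one j]
      have hC := fact_cast_ne j
      simp only [Nat.factorial_zero]
      push_cast
      field_simp
      ring
    · exfalso; omega
    · exfalso; omega
    · exfalso; omega
    · exfalso; omega
    · exfalso; omega
    · -- beyond
      ring
/-- R1 : `d • g_{2d+1,d} = (d t + 2d) g_{2d,d} - (t²+t) g_{2d,d}'`. -/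
theorem recE (d : ℕ) (hd : 1 ≤ d) :
    C (d : ℝ) * gPoly (2 * d + 1) d
      = (C (d : ℝ) * X + C (2 * (d : ℝ))) * gPoly (2 * d) d
        - C 1 * (X ^ 2 + X) * derivative (gPoly (2 * d) d) := by
  ext j
  rw [coeff_C_mul]
  match j with
  | 0 =>
    rw [coeff_comb_zero, coeff_gH, coeff_gG, if_neg (by omega), if_neg (by omega)]
    ring
  | 1 =>
    rw [coeff_comb_one, coeff_gH, coeff_gG, coeff_gG]
    rw [if_pos ⟨le_refl 1, hd⟩, if_neg (by omega), if_pos ⟨le_refl 1, hd⟩]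
    obtain ⟨e, rfl⟩ : ∃ e, d = e + 1 := ⟨d - 1, by omega⟩
    rw [show 2 * (e + 1) - 1 - 1 = 2 * e by omega,
      show 2 * (e + 1) - 1 = 2 * e + 1 by omega,
      show e + 1 - 1 = e by omega,
      show e + 1 + 1 - 1 = e + 1 by omega]
    rw [show 2 * e + 1 = (2 * e) + 1 by omega, fact_add_one, fact_add_one e]
    have hA := fact_cast_ne (2 * e)
    have hB := fact_cast_ne e
    push_cast
    field_simp
    ring
  | (j + 2) =>
    rw [coeff_comb, coeff_gH, coeff_gG, coeff_gG]
    split_ifs with h1 h2 h2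
    · -- interior : j+2 ≤ d
      obtain ⟨q, rfl⟩ : ∃ q, d = j + 2 + q := ⟨d - (j + 2), by omega⟩
      rw [show 2 * (j + 2 + q) - (j + 2) - 1 = j + 2 * q + 1 by omega,
        show 2 * (j + 2 + q) - (j + 2) = j + 2 * q + 2 by omega,
        show 2 * (j + 2 + q) - (j + 1) - 1 = j + 2 * q + 2 by omega,
        show j + 2 + q - (j + 2) = q by omega,
        show j + 2 + q + 1 - (j + 2) = q + 1 by omega,
        show j + 2 + q - (j + 1) = q + 1 by omega,
        show j + 2 - 1 = j + 1 by omega,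
        show j + 1 - 1 = j by omega]
      rw [show j + 2 * q + 2 = (j + 2 * q + 1) + 1 by omega, fact_add_one,
        fact_add_one q, fact_add_one j]
      have hA := fact_cast_ne (j + 2 * q + 1)
      have hB := fact_cast_ne q
      have hC := fact_cast_ne j
      push_cast
      field_simp
      ring
    · exfalso; omega
    · -- h1 false, h2 true : j + 2 = d + 1, coefficient vanishes
      obtain rfl : d = j + 1 := by omega
      push_cast
      ring
    · ring

set_option maxHeartbeats 1600000 in
/-- R2 : `d • g_{2d+2,d+1} = ((d+1) t + 2d+1) g_{2d+1,d} - (t²+t) g_{2d+1,d}'`. -/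
theorem recO (d : ℕ) (hd : 1 ≤ d) :
    C (d : ℝ) * gPoly (2 * (d + 1)) (d + 1)
      = (C ((d : ℝ) + 1) * X + C (2 * (d : ℝ) + 1)) * gPoly (2 * d + 1) d
        - C 1 * (X ^ 2 + X) * derivative (gPoly (2 * d + 1) d) := by
  ext j
  rw [coeff_C_mul]
  match j with
  | 0 =>
    rw [coeff_comb_zero, coeff_gG, coeff_gH, if_neg (by omega), if_neg (by omega)]
    ring
  | 1 =>
    rw [coeff_comb_one, coeff_gG, coeff_gH, coeff_gH]
    rw [if_pos (by omega : 1 ≤ 1 ∧ 1 ≤ d + 1), if_neg (by omega), if_pos ⟨le_refl 1, hd⟩]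
    obtain ⟨e, rfl⟩ : ∃ e, d = e + 1 := ⟨d - 1, by omega⟩
    rw [show 2 * (e + 1 + 1) - 1 - 1 = 2 * e + 2 by omega,
      show e + 1 + 1 - 1 = e + 1 by omega,
      show 2 * (e + 1) - 1 = 2 * e + 1 by omega,
      show e + 1 - 1 = e by omega]
    rw [show 2 * e + 2 = (2 * e + 1) + 1 by omega, fact_add_one (2 * e + 1),
      show 2 * e + 1 = (2 * e) + 1 by omega, fact_add_one (2 * e), fact_add_one e]
    have hA := fact_cast_ne (2 * e)
    have hB := fact_cast_ne e
    push_cast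
    field_simp
    ring
  | (j + 2) =>
    rw [coeff_comb, coeff_gG, coeff_gH, coeff_gH]
    split_ifs with h1 h2 h3 h2 h3 h3
    · -- interior : j+2 ≤ d
      obtain ⟨q, rfl⟩ : ∃ q, d = j + 2 + q := ⟨d - (j + 2), by omega⟩
      rw [show 2 * (j + 2 + q + 1) - (j + 2) - 1 = j + 2 * q + 3 by omega,
        show j + 2 + q + 1 - (j + 2) = q + 1 by omega,
        show 2 * (j + 2 + q) - (j + 1) = j + 2 * q + 3 by omega,
        show j + 2 + q - (j + 1) = q + 1 by omega,
        show j + 2 + q + 1 - (j + 1) = q + 2 by omega,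
        show 2 * (j + 2 + q) - (j + 2) = j + 2 * q + 2 by omega,
        show j + 2 + q - (j + 2) = q by omega,
        show j + 2 - 1 = j + 1 by omega,
        show j + 1 - 1 = j by omega]
      rw [show j + 2 * q + 3 = (j + 2 * q + 2) + 1 by omega, fact_add_one (j + 2 * q + 2),
        show j + 2 * q + 2 = (j + 2 * q + 1) + 1 by omega, fact_add_one (j + 2 * q + 1),
        show q + 2 = (q + 1) + 1 by omega, fact_add_one (q + 1),
        fact_add_one q, fact_add_one j]
      have hA := fact_cast_ne (j + 2 * q + 1)
      have hB := fact_cast_ne q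
      have hC := fact_cast_ne j
      push_cast
      field_simp
      ring
    · -- top : d = j + 1
      obtain rfl : d = j + 1 := by omega
      rw [show 2 * (j + 1 + 1) - (j + 2) - 1 = j + 1 by omega,
        show j + 1 + 1 - (j + 2) = 0 by omega,
        show 2 * (j + 1) - (j + 1) = j + 1 by omega,
        show j + 1 - (j + 1) = 0 by omega,
        show j + 1 + 1 - (j + 1) = 1 by omega,
        show j + 2 - 1 = j + 1 by omega,
        show j + 1 - 1 = j by omega]
      rw [fact_add_one j]
      have hC := fact_cast_ne j
      simp only [Nat.factorial_zero, Nat.factorial_one]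
      push_cast
      field_simp
      try ring
    · exfalso; omega
    · exfalso; omega
    · exfalso; omega
    · exfalso; omega
    · exfalso; omega
    · ring

set_option maxHeartbeats 1600000 in
/-- R4 : `d(d+1) • g_{2d+3,d+1} = ((3d²+3d+1) t + (2d+1)²) g_{2d+1,d} - (2d+1)(t²+t) g'`. -/
theorem recH (d : ℕ) (hd : 1 ≤ d) :
    C ((d : ℝ) * ((d : ℝ) + 1)) * gPoly (2 * (d + 1) + 1) (d + 1)
      = (C (3 * (d : ℝ) ^ 2 + 3 * (d : ℝ) + 1) * X + C ((2 * (d : ℝ) + 1) ^ 2)) *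
          gPoly (2 * d + 1) d
        - C (2 * (d : ℝ) + 1) * (X ^ 2 + X) * derivative (gPoly (2 * d + 1) d) := by
  ext j
  rw [coeff_C_mul]
  match j with
  | 0 =>
    rw [coeff_comb_zero, coeff_gH, coeff_gH, if_neg (by omega), if_neg (by omega)]
    ring
  | 1 =>
    rw [coeff_comb_one, coeff_gH, coeff_gH, coeff_gH]
    rw [if_pos (by omega : 1 ≤ 1 ∧ 1 ≤ d + 1), if_neg (by omega), if_pos ⟨le_refl 1, hd⟩]
    obtain ⟨e, rfl⟩ : ∃ e, d = e + 1 := ⟨d - 1, by omega⟩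
    rw [show 2 * (e + 1 + 1) - 1 = 2 * e + 3 by omega,
      show e + 1 + 1 - 1 = e + 1 by omega,
      show e + 1 + 1 + 1 - 1 = e + 2 by omega,
      show 2 * (e + 1) - 1 = 2 * e + 1 by omega,
      show e + 1 - 1 = e by omega]
    rw [show 2 * e + 3 = (2 * e + 2) + 1 by omega, fact_add_one (2 * e + 2),
      show 2 * e + 2 = (2 * e + 1) + 1 by omega, fact_add_one (2 * e + 1),
      show e + 2 = (e + 1) + 1 by omega, fact_add_one (e + 1), fact_add_one e]
    have hA := fact_cast_ne (2 * e + 1)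
    have hB := fact_cast_ne e
    push_cast
    field_simp
    ring
  | (j + 2) =>
    rw [coeff_comb, coeff_gH, coeff_gH, coeff_gH]
    split_ifs with h1 h2 h3 h2 h3 h3
    · -- interior : j+2 ≤ d
      obtain ⟨q, rfl⟩ : ∃ q, d = j + 2 + q := ⟨d - (j + 2), by omega⟩
      rw [show 2 * (j + 2 + q + 1) - (j + 2) = j + 2 * q + 4 by omega,
        show j + 2 + q + 1 - (j + 2) = q + 1 by omega,
        show j + 2 + q + 1 + 1 - (j + 2) = q + 2 by omega,
        show 2 * (j + 2 + q) - (j + 1) = j + 2 * q + 3 by omega,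
        show j + 2 + q - (j + 1) = q + 1 by omega,
        show j + 2 + q + 1 - (j + 1) = q + 2 by omega,
        show 2 * (j + 2 + q) - (j + 2) = j + 2 * q + 2 by omega,
        show j + 2 + q - (j + 2) = q by omega,
        show j + 2 - 1 = j + 1 by omega,
        show j + 1 - 1 = j by omega]
      rw [show j + 2 * q + 4 = (j + 2 * q + 3) + 1 by omega, fact_add_one (j + 2 * q + 3),
        show j + 2 * q + 3 = (j + 2 * q + 2) + 1 by omega, fact_add_one (j + 2 * q + 2),
        show j + 2 * q + 2 = (j + 2 * q + 1) + 1 by omega, fact_add_one (j + 2 * q + 1),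
        show q + 2 = (q + 1) + 1 by omega, fact_add_one (q + 1),
        fact_add_one q, fact_add_one j]
      have hA := fact_cast_ne (j + 2 * q + 1)
      have hB := fact_cast_ne q
      have hC := fact_cast_ne j
      push_cast
      field_simp
      ring
    · -- top : d = j + 1
      obtain rfl : d = j + 1 := by omega
      rw [show 2 * (j + 1 + 1) - (j + 2) = j + 2 by omega,
        show j + 1 + 1 - (j + 2) = 0 by omega,
        show j + 1 + 1 + 1 - (j + 2) = 1 by omega,
        show 2 * (j + 1) - (j + 1) = j + 1 by omega,
        show j + 1 - (j + 1) = 0 by omega,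
        show j + 1 + 1 - (j + 1) = 1 by omega,
        show j + 2 - 1 = j + 1 by omega,
        show j + 1 - 1 = j by omega]
      rw [show j + 2 = (j + 1) + 1 by omega, fact_add_one (j + 1), fact_add_one j]
      have hC := fact_cast_ne j
      simp only [Nat.factorial_zero, Nat.factorial_one]
      push_cast
      field_simp
      try ring
    · exfalso; omega
    · exfalso; omega
    · exfalso; omega
    · exfalso; omega
    · exfalso; omega
    · ring
theorem gPoly_two : gPoly 2 1 = X := by
  unfold gPoly
  norm_num [Nat.factorial]

theorem gPoly_three : gPoly 3 1 = X := by
  unfold gPoly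
  norm_num [Nat.factorial]

theorem rootData_X : RootData X 1 [] := by
  refine ⟨one_pos, List.Pairwise.nil, by simp, ?_⟩
  simp

theorem RootData.of_C_mul {p : Polynomial ℝ} {lc t : ℝ} {L : List ℝ} (ht : 0 < t)
    (h : RootData (C t * p) lc L) : RootData p (lc / t) L := by
  refine ⟨div_pos h.1 ht, h.2.1, h.2.2.1, ?_⟩
  have h4 := h.2.2.2
  have hp : p = C t⁻¹ * (C t * p) := by
    rw [← mul_assoc, ← C_mul, inv_mul_cancel₀ (ne_of_gt ht), C_1, one_mul]
  rw [hp, h4, ← mul_assoc, ← C_mul, division_def, mul_comm lc t⁻¹]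

theorem interlaces_C_mul {f F : Polynomial ℝ} {t : ℝ} (ht : t ≠ 0)
    (h : Interlaces f (C t * F)) : Interlaces f F := by
  obtain ⟨h1, h2, h3⟩ := h
  have hroots : (C t * F).roots = F.roots := roots_C_mul F ht
  have hdeg : (C t * F).natDegree = F.natDegree := natDegree_C_mul ht
  have hasc : ascRoots (C t * F) = ascRoots F := by unfold ascRoots; rw [hroots]
  refine ⟨h1, ?_, ?_⟩
  · unfold RealRooted at h2 ⊢
    rw [← hroots, ← hdeg]; exact h2
  · rcases h3 with h | h | h | h
    · exact Or.inl h
    · right; left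
      rcases mul_eq_zero.mp h with hc | h0
      · exact absurd hc (by simp [ht])
      · exact h0
    · right; right; left; rwa [hdeg, hasc] at h
    · right; right; right; rwa [hdeg, hasc] at h

/-- One step along the even diagonal `g_{2d,d} → g_{2d+2,d+1}`. -/
theorem G_step (d : ℕ) (hd : 1 ≤ d) {lc : ℝ} {L : List ℝ}
    (hrd : RootData (gPoly (2 * d) d) lc L) (hlen : L.length + 1 = d) :
    ∃ lc' L', RootData (gPoly (2 * (d + 1)) (d + 1)) lc' L' ∧ L'.length + 1 = d + 1 ∧
      Interlaces (gPoly (2 * d) d) (gPoly (2 * (d + 1)) (d + 1)) := by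
  have hd1 : (1:ℝ) ≤ d := by exact_mod_cast hd
  have hc : (0:ℝ) < 2 := by norm_num
  have hab : 3 * (d:ℝ) < 4 * (d:ℝ) := by linarith
  have hlt : 2 * ((L.length : ℝ) + 1) < 3 * (d:ℝ) := by
    have h1 : ((L.length : ℝ) + 1) = d := by exact_mod_cast hlen
    rw [h1]; linarith
  obtain ⟨w, Z, hrdF, hZlen, hint⟩ := step_raise hrd hc hab hlt
  rw [← recG d hd] at hrdF hint
  have hd0 : (0:ℝ) < d := by linarith
  exact ⟨_, w :: Z, RootData.of_C_mul hd0 hrdF,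
    by rw [List.length_cons, hZlen]; omega, interlaces_C_mul (ne_of_gt hd0) hint⟩

/-- One step along the odd diagonal `g_{2d+1,d} → g_{2d+3,d+1}`. -/
theorem H_step (d : ℕ) (hd : 1 ≤ d) {lc : ℝ} {L : List ℝ}
    (hrd : RootData (gPoly (2 * d + 1) d) lc L) (hlen : L.length + 1 = d) :
    ∃ lc' L', RootData (gPoly (2 * (d + 1) + 1) (d + 1)) lc' L' ∧ L'.length + 1 = d + 1 ∧
      Interlaces (gPoly (2 * d + 1) d) (gPoly (2 * (d + 1) + 1) (d + 1)) := by
  have hd1 : (1:ℝ) ≤ d := by exact_mod_cast hd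
  have hc : (0:ℝ) < 2 * (d:ℝ) + 1 := by linarith
  have hab : 3 * (d:ℝ) ^ 2 + 3 * (d:ℝ) + 1 < (2 * (d:ℝ) + 1) ^ 2 := by nlinarith
  have hlt : (2 * (d:ℝ) + 1) * ((L.length : ℝ) + 1) < 3 * (d:ℝ) ^ 2 + 3 * (d:ℝ) + 1 := by
    have h1 : ((L.length : ℝ) + 1) = d := by exact_mod_cast hlen
    rw [h1]; nlinarith
  obtain ⟨w, Z, hrdF, hZlen, hint⟩ := step_raise hrd hc hab hlt
  rw [← recH d hd] at hrdF hint
  have hd0 : (0:ℝ) < (d:ℝ) * ((d:ℝ) + 1) := by nlinarith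
  exact ⟨_, w :: Z, RootData.of_C_mul hd0 hrdF,
    by rw [List.length_cons, hZlen]; omega, interlaces_C_mul (ne_of_gt hd0) hint⟩

/-- Even-to-odd step `g_{2d,d} → g_{2d+1,d}` (equal degree). -/
theorem E_step (d : ℕ) (hd : 1 ≤ d) {lc : ℝ} {L : List ℝ}
    (hrd : RootData (gPoly (2 * d) d) lc L) (hlen : L.length + 1 = d) :
    ∃ lc' L', RootData (gPoly (2 * d + 1) d) lc' L' ∧ L'.length + 1 = d ∧
      Interlaces (gPoly (2 * d) d) (gPoly (2 * d + 1) d) := by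
  have hd1 : (1:ℝ) ≤ d := by exact_mod_cast hd
  have hc : (0:ℝ) < 1 := one_pos
  have hab : (d:ℝ) < 2 * (d:ℝ) := by linarith
  have heq : (d:ℝ) = 1 * ((L.length : ℝ) + 1) := by
    have h1 : ((L.length : ℝ) + 1) = d := by exact_mod_cast hlen
    rw [h1, one_mul]
  obtain ⟨Z, hrdF, hZlen, hint⟩ := step_equal hrd hc hab heq
  rw [← recE d hd] at hrdF hint
  have hd0 : (0:ℝ) < d := by linarith
  exact ⟨_, Z, RootData.of_C_mul hd0 hrdF,
    by rw [hZlen]; omega, interlaces_C_mul (ne_of_gt hd0) hint⟩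

/-- Odd-to-even step `g_{2d+1,d} → g_{2d+2,d+1}` (degree raising). -/
theorem O_step (d : ℕ) (hd : 1 ≤ d) {lc : ℝ} {L : List ℝ}
    (hrd : RootData (gPoly (2 * d + 1) d) lc L) (hlen : L.length + 1 = d) :
    ∃ lc' L', RootData (gPoly (2 * (d + 1)) (d + 1)) lc' L' ∧ L'.length + 1 = d + 1 ∧
      Interlaces (gPoly (2 * d + 1) d) (gPoly (2 * (d + 1)) (d + 1)) := by
  have hd1 : (1:ℝ) ≤ d := by exact_mod_cast hd
  have hc : (0:ℝ) < 1 := one_pos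
  have hab : (d:ℝ) + 1 < 2 * (d:ℝ) + 1 := by linarith
  have hlt : 1 * ((L.length : ℝ) + 1) < (d:ℝ) + 1 := by
    have h1 : ((L.length : ℝ) + 1) = d := by exact_mod_cast hlen
    rw [h1]; linarith
  obtain ⟨w, Z, hrdF, hZlen, hint⟩ := step_raise hrd hc hab hlt
  rw [← recO d hd] at hrdF hint
  have hd0 : (0:ℝ) < d := by linarith
  exact ⟨_, w :: Z, RootData.of_C_mul hd0 hrdF,
    by rw [List.length_cons, hZlen]; omega, interlaces_C_mul (ne_of_gt hd0) hint⟩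

theorem base_G : RootData (gPoly (2 * 1) 1) 1 [] := by
  rw [show 2 * 1 = 2 from rfl, gPoly_two]; exact rootData_X

theorem base_H : RootData (gPoly (2 * 1 + 1) 1) 1 [] := by
  rw [show 2 * 1 + 1 = 3 from rfl, gPoly_three]; exact rootData_X

theorem G_inv : ∀ d : ℕ, 1 ≤ d →
    ∃ lc L, RootData (gPoly (2 * d) d) lc L ∧ L.length + 1 = d := by
  intro d hd
  induction d with
  | zero => omega
  | succ n ih =>
    rcases Nat.lt_or_ge n 1 with h | h
    · obtain rfl : n = 0 := by omega
      exact ⟨1, [], base_G, rfl⟩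
    · obtain ⟨lc, L, hrd, hlen⟩ := ih h
      obtain ⟨lc', L', hrd', hlen', _⟩ := G_step n h hrd hlen
      exact ⟨lc', L', hrd', hlen'⟩

theorem H_inv : ∀ d : ℕ, 1 ≤ d →
    ∃ lc L, RootData (gPoly (2 * d + 1) d) lc L ∧ L.length + 1 = d := by
  intro d hd
  induction d with
  | zero => omega
  | succ n ih =>
    rcases Nat.lt_or_ge n 1 with h | h
    · obtain rfl : n = 0 := by omega
      exact ⟨1, [], base_H, rfl⟩
    · obtain ⟨lc, L, hrd, hlen⟩ := ih h
      obtain ⟨lc', L', hrd', hlen', _⟩ := H_step n h hrd hlen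
      exact ⟨lc', L', hrd', hlen'⟩

theorem Phi_inv : ∀ n : ℕ, 2 ≤ n →
    ∃ lc L, RootData (gPoly n (n / 2)) lc L ∧ L.length + 1 = n / 2 := by
  intro n
  induction n with
  | zero => omega
  | succ m ih =>
    intro hm
    rcases Nat.lt_or_ge m 2 with h | h
    · obtain rfl : m = 1 := by omega
      exact ⟨1, [], base_G, rfl⟩
    · obtain ⟨lc, L, hrd, hlen⟩ := ih h
      rcases Nat.even_or_odd m with ⟨k, hk⟩ | ⟨k, hk⟩
      · -- m = 2k even, m+1 odd with (m+1)/2 = k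
        have hk1 : 1 ≤ k := by omega
        have he1 : m / 2 = k := by omega
        have he2 : (m + 1) / 2 = k := by omega
        rw [hk, show k + k = 2 * k by ring] at hrd
        rw [show 2 * k / 2 = k by omega] at hrd
        rw [he1] at hlen
        obtain ⟨lc', L', hrd', hlen', _⟩ := E_step k hk1 hrd hlen
        refine ⟨lc', L', ?_, by omega⟩
        rw [he2, show m + 1 = 2 * k + 1 by omega]
        exact hrd'
      · -- m = 2k+1 odd, m+1 = 2(k+1)
        have hk1 : 1 ≤ k := by omega
        have he1 : m / 2 = k := by omega
        have he2 : (m + 1) / 2 = k + 1 := by omega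
        rw [hk] at hrd
        rw [show (2 * k + 1) / 2 = k by omega] at hrd
        rw [he1] at hlen
        obtain ⟨lc', L', hrd', hlen', _⟩ := O_step k hk1 hrd hlen
        refine ⟨lc', L', ?_, by omega⟩
        rw [he2, show m + 1 = 2 * (k + 1) by omega]
        exact hrd'
end GSturm

/-- The sequences `{g_{2d,d}}_{d ≥ 1}`, `{g_{2d+1,d}}_{d ≥ 1}` and `{g_{n,⌊n/2⌋}}_{n ≥ 2}`
are generalized Sturm sequences:
`g_{2d,d} ⪯ g_{2d+2,d+1}`, `g_{2d+1,d} ⪯ g_{2d+3,d+1}` for `d ≥ 1`, and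
`g_{n,⌊n/2⌋} ⪯ g_{n+1,⌊(n+1)/2⌋}` for `n ≥ 2`. -/
theorem gPoly_sturm_diagonals :
    (∀ d : ℕ, 1 ≤ d → Interlaces (gPoly (2 * d) d) (gPoly (2 * d + 2) (d + 1))) ∧
    (∀ d : ℕ, 1 ≤ d → Interlaces (gPoly (2 * d + 1) d) (gPoly (2 * d + 3) (d + 1))) ∧
    (∀ n : ℕ, 2 ≤ n → Interlaces (gPoly n (n / 2)) (gPoly (n + 1) ((n + 1) / 2))) := by
  refine ⟨?_, ?_, ?_⟩
  · intro d hd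
    obtain ⟨lc, L, hrd, hlen⟩ := GSturm.G_inv d hd
    obtain ⟨_, _, _, _, hint⟩ := GSturm.G_step d hd hrd hlen
    rwa [show 2 * (d + 1) = 2 * d + 2 by ring] at hint
  · intro d hd
    obtain ⟨lc, L, hrd, hlen⟩ := GSturm.H_inv d hd
    obtain ⟨_, _, _, _, hint⟩ := GSturm.H_step d hd hrd hlen
    rwa [show 2 * (d + 1) + 1 = 2 * d + 3 by ring] at hint
  · intro n hn
    obtain ⟨lc, L, hrd, hlen⟩ := GSturm.Phi_inv n hn
    rcases Nat.even_or_odd n with ⟨k, hk⟩ | ⟨k, hk⟩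
    · have hk1 : 1 ≤ k := by omega
      obtain rfl : n = 2 * k := by omega
      rw [show 2 * k / 2 = k by omega] at hrd hlen ⊢
      rw [show (2 * k + 1) / 2 = k by omega]
      obtain ⟨_, _, _, _, hint⟩ := GSturm.E_step k hk1 hrd hlen
      exact hint
    · have hk1 : 1 ≤ k := by omega
      obtain rfl : n = 2 * k + 1 := by omega
      rw [show (2 * k + 1) / 2 = k by omega] at hrd hlen ⊢
      rw [show 2 * k + 1 + 1 = 2 * (k + 1) by ring, show 2 * (k + 1) / 2 = k + 1 by omega]
      obtain ⟨_, _, _, _, hint⟩ := GSturm.O_step k hk1 hrd hlen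
      exact hint
end

section
/- Let f_n(t) = g_{n,⌊n/2⌋}(t) for n ≥ 3, and for n ≥ 3 let r_n(1) = f_{n−1}(1)/f_n(1) (note f_n(1) > 0 for n ≥ 2). Then the sequence r_n(1) converges as n → ∞ and lim_{n→∞} r_n(1) = −1 + √2. -/
open Polynomial

namespace GAux

open Finset Filter

def u (m : ℕ) : ℕ := ∑ k ∈ range (m+1), (m.choose k)^2 * 2^k
def v (m : ℕ) : ℕ := ∑ k ∈ range (m+1), m.choose k * (m+1).choose k * 2^k

lemma u_pos (m : ℕ) : 0 < u m := by
  unfold u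
  have h0 : (0:ℕ) ∈ range (m+1) := by simp
  refine Finset.sum_pos' (fun k _ => Nat.zero_le _) ⟨0, h0, by simp⟩

lemma v_pos (m : ℕ) : 0 < v m := by
  unfold v
  have h0 : (0:ℕ) ∈ range (m+1) := by simp
  refine Finset.sum_pos' (fun k _ => Nat.zero_le _) ⟨0, h0, by simp⟩

lemma choose_mul_choose (m j c : ℕ) (hc : c ≤ m) :
    m.choose j * (m - j).choose c = m.choose c * (m - c).choose j := by
  by_cases h : j + c ≤ m
  · have h1 := Nat.choose_mul (n := m) (k := j + c) (s := c) (Nat.le_add_left _ _)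
    have h2 := Nat.choose_mul (n := m) (k := j + c) (s := j) (Nat.le_add_right _ _)
    have hs : (j + c).choose c = (j + c).choose j := by
      rw [← Nat.choose_symm (Nat.le_add_left c j)]; congr 1; omega
    rw [show j + c - c = j by omega] at h1
    rw [show j + c - j = c by omega] at h2
    -- h1 : m.choose (j+c) * (j+c).choose c = m.choose c * (m - c).choose j
    -- h2 : m.choose (j+c) * (j+c).choose j = m.choose j * (m - j).choose c
    rw [← h2, ← h1, hs]
  · have e1 : (m - j).choose c = 0 ∨ m.choose j = 0 := by
      by_cases hj : j ≤ m
      · left; exact Nat.choose_eq_zero_of_lt (by omega)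
      · right; exact Nat.choose_eq_zero_of_lt (by omega)
    have e2 : (m - c).choose j = 0 := Nat.choose_eq_zero_of_lt (by omega)
    rcases e1 with e | e <;> simp [e, e2]

lemma inner_sum (M c : ℕ) (hc : c ≤ M) :
    ∑ j ∈ range (M+1), M.choose j * (M - j).choose c = M.choose c * 2^(M - c) := by
  have : ∀ j ∈ range (M+1), M.choose j * (M - j).choose c = M.choose c * (M - c).choose j :=
    fun j _ => choose_mul_choose M j c hc
  rw [Finset.sum_congr rfl this, ← Finset.mul_sum]
  congr 1
  rw [← Nat.sum_range_choose (M - c)]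
  symm
  apply Finset.sum_subset
  · apply Finset.range_subset_range.2; omega
  · intro x _ hx
    exact Nat.choose_eq_zero_of_lt (by simp at hx ⊢; omega)

lemma sumA (m : ℕ) :
    ∑ j ∈ range (m+1), (2*m - j).choose (m - j) * m.choose j = u m := by
  have step1 : ∀ j ∈ range (m+1),
      (2*m - j).choose (m - j) * m.choose j
        = ∑ k ∈ range (m+1), m.choose k * ((m - j).choose (m - k) * m.choose j) := by
    intro j hj
    simp only [Finset.mem_range] at hj
    have hsymm : (2*m - j).choose (m - j) = (2*m - j).choose m := by
      rw [← Nat.choose_symm (show m ≤ 2*m - j by omega)]; congr 1; omega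
    rw [hsymm, show 2*m - j = m + (m - j) by omega, Nat.add_choose_eq,
      Finset.Nat.sum_antidiagonal_eq_sum_range_succ_mk, Finset.sum_mul]
    exact Finset.sum_congr rfl fun k _ => by ring
  rw [Finset.sum_congr rfl step1, Finset.sum_comm]
  unfold u
  refine Finset.sum_congr rfl fun k hk => ?_
  simp only [Finset.mem_range] at hk
  have : ∀ j ∈ range (m+1), m.choose k * ((m - j).choose (m - k) * m.choose j)
      = m.choose k * (m.choose j * ((m - j)).choose (m - k)) := fun j _ => by ring
  rw [Finset.sum_congr rfl this, ← Finset.mul_sum,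
    inner_sum m (m - k) (by omega), Nat.choose_symm (by omega),
    show m - (m - k) = k by omega]
  ring

lemma sumB (m : ℕ) :
    ∑ j ∈ range (m+1), (2*m+1 - j).choose (m - j) * (m+1).choose j = v m := by
  have step1 : ∀ j ∈ range (m+1),
      (2*m+1 - j).choose (m - j) * (m+1).choose j
        = ∑ k ∈ range (m+2), m.choose k * ((m+1 - j).choose (m+1 - k) * (m+1).choose j) := by
    intro j hj
    simp only [Finset.mem_range] at hj
    have hsymm : (2*m+1 - j).choose (m - j) = (2*m+1 - j).choose (m+1) := by
      rw [← Nat.choose_symm (show m+1 ≤ 2*m+1 - j by omega)]; congr 1; omega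
    rw [hsymm, show 2*m+1 - j = m + (m+1 - j) by omega, Nat.add_choose_eq,
      Finset.Nat.sum_antidiagonal_eq_sum_range_succ_mk, Finset.sum_mul]
    exact Finset.sum_congr rfl fun k _ => by ring
  rw [Finset.sum_congr rfl step1, Finset.sum_comm]
  rw [Finset.sum_range_succ, Nat.choose_eq_zero_of_lt (by omega)]
  simp only [zero_mul, Finset.sum_const_zero, mul_zero, add_zero]
  unfold v
  refine Finset.sum_congr rfl fun k hk => ?_
  simp only [Finset.mem_range] at hk
  have hext : ∑ j ∈ range (m+2), (m+1).choose j * ((m+1 - j).choose (m+1 - k))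
      = ∑ j ∈ range (m+1), (m+1).choose j * ((m+1 - j).choose (m+1 - k)) := by
    rw [Finset.sum_range_succ]
    have h0 : Nat.choose (m+1 - (m+1)) (m+1-k) = 0 := by
      rw [show m+1 - (m+1) = 0 by omega]
      exact Nat.choose_eq_zero_of_lt (by omega)
    rw [h0, mul_zero, add_zero]
  have : ∀ j ∈ range (m+1), m.choose k * ((m+1 - j).choose (m+1 - k) * (m+1).choose j)
      = m.choose k * ((m+1).choose j * ((m+1 - j)).choose (m+1 - k)) := fun j _ => by ring
  rw [Finset.sum_congr rfl this, ← Finset.mul_sum, ← hext,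
    inner_sum (m+1) (m+1 - k) (by omega), Nat.choose_symm (by omega),
    show m+1 - (m+1 - k) = k by omega]
  ring

lemma u_succ (m : ℕ) : u (m+1) = 2 * v m + u m := by
  set T := ∑ k ∈ range m, m.choose k * m.choose (k+1) * 2^(k+1) with hT
  have hu : u m = (∑ k ∈ range m, (m.choose (k+1))^2 * 2^(k+1)) + 1 := by
    unfold u
    rw [Finset.sum_range_succ' (fun k => (m.choose k)^2 * 2^k) m]
    simp
  have C1 : v m = u m + T := by
    unfold v
    rw [Finset.sum_range_succ' (fun k => m.choose k * (m+1).choose k * 2^k) m]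
    have step : ∀ k ∈ range m, m.choose (k+1) * (m+1).choose (k+1) * 2^(k+1)
        = m.choose k * m.choose (k+1) * 2^(k+1) + (m.choose (k+1))^2 * 2^(k+1) := by
      intro k _; rw [Nat.choose_succ_succ]; ring
    rw [Finset.sum_congr rfl step, Finset.sum_add_distrib]
    simp only [Nat.choose_zero_right, pow_zero, mul_one, one_mul]
    omega
  have C2 : u (m+1) = 3 * u m + 2 * T := by
    have hTe : ∑ k ∈ range (m+1), m.choose k * m.choose (k+1) * 2^(k+1) = T := by
      rw [Finset.sum_range_succ, Nat.choose_succ_self, mul_zero, zero_mul, add_zero]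
    have hue : ∑ k ∈ range (m+1), (m.choose (k+1))^2 * 2^(k+1)
        = ∑ k ∈ range m, (m.choose (k+1))^2 * 2^(k+1) := by
      rw [Finset.sum_range_succ, Nat.choose_succ_self]
      norm_num
    unfold u
    rw [Finset.sum_range_succ' (fun k => ((m+1).choose k)^2 * 2^k) (m+1)]
    have step : ∀ k ∈ range (m+1), ((m+1).choose (k+1))^2 * 2^(k+1)
        = (m.choose k)^2 * 2^k * 2
          + (m.choose k * m.choose (k+1) * 2^(k+1)) * 2
          + (m.choose (k+1))^2 * 2^(k+1) := by
      intro k _; rw [Nat.choose_succ_succ]; ring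
    rw [Finset.sum_congr rfl step, Finset.sum_add_distrib, Finset.sum_add_distrib,
      ← Finset.sum_mul, ← Finset.sum_mul, hTe, hue]
    simp only [Nat.choose_zero_right, pow_zero, one_pow, mul_one]
    have hbody : (∑ i ∈ range (m + 1), m.choose i ^ 2 * 2 ^ i) = u m := rfl
    omega
  omega

noncomputable def Gw (m j : ℕ) : ℝ :=
  2^j * ((m+2).choose j : ℝ)^2 * (j:ℝ)^2 * ((j:ℝ)^2 - 2*j - (m+2)*(2*m+1))
    / (((m:ℝ)+1) * ((m:ℝ)+2)^2)

lemma ptwise (m k : ℕ) :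
    ((m:ℝ)+2) * (((m+2).choose k : ℝ)^2 * 2^k)
      - 3*(2*(m:ℝ)+3) * (((m+1).choose k : ℝ)^2 * 2^k)
      + ((m:ℝ)+1) * ((m.choose k : ℝ)^2 * 2^k)
    = Gw m (k+1) - Gw m k := by
  have hm2 : ((m:ℝ)+2) ≠ 0 := by positivity
  have hm1 : ((m:ℝ)+1) ≠ 0 := by positivity
  have hk1 : ((k:ℝ)+1) ≠ 0 := by positivity
  -- relations
  have h1 : (((m+1).choose k : ℝ)) * ((m:ℝ)+2) = ((m+2).choose k : ℝ) * ((m:ℝ)+2 - k) := by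
    by_cases hk : k ≤ m + 2
    · have hnat : (m+1).choose k * (m+2) = (m+2).choose k * (m+2-k) :=
        Nat.choose_mul_succ_eq (m+1) k
      have hc : (((m+1).choose k : ℝ)) * ((m:ℝ)+2)
          = ((m+2).choose k : ℝ) * (((m+2-k : ℕ)) : ℝ) := by exact_mod_cast hnat
      rw [Nat.cast_sub hk] at hc
      push_cast at hc ⊢
      linarith
    · rw [Nat.choose_eq_zero_of_lt (by omega), Nat.choose_eq_zero_of_lt (by omega)]
      simp
  have h2 : ((m.choose k : ℝ)) * ((m:ℝ)+1) = ((m+1).choose k : ℝ) * ((m:ℝ)+1 - k) := by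
    by_cases hk : k ≤ m + 1
    · have hnat : m.choose k * (m+1) = (m+1).choose k * (m+1-k) :=
        Nat.choose_mul_succ_eq m k
      have hc : ((m.choose k : ℝ)) * ((m:ℝ)+1)
          = ((m+1).choose k : ℝ) * (((m+1-k : ℕ)) : ℝ) := by exact_mod_cast hnat
      rw [Nat.cast_sub hk] at hc
      push_cast at hc ⊢
      linarith
    · rw [Nat.choose_eq_zero_of_lt (by omega), Nat.choose_eq_zero_of_lt (by omega)]
      simp
  have h3 : (((m+2).choose (k+1) : ℝ)) * ((k:ℝ)+1) = ((m+2).choose k : ℝ) * ((m:ℝ)+2 - k) := by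
    have hnat : (m+2) * (m+1).choose k = (m+2).choose (k+1) * (k+1) :=
      Nat.add_one_mul_choose_eq (m+1) k
    have hc : ((m:ℝ)+2) * (((m+1).choose k : ℝ))
        = ((m+2).choose (k+1) : ℝ) * ((k:ℝ)+1) := by exact_mod_cast hnat
    nlinarith [hc, h1]
  -- express everything over c := choose (m+2) k
  set c : ℝ := ((m+2).choose k : ℝ) with hc
  have hB : ((m+1).choose k : ℝ) = c * ((m:ℝ)+2 - k) / ((m:ℝ)+2) := by
    field_simp; linarith [h1]
  have hA : (m.choose k : ℝ) = c * ((m:ℝ)+2 - k) * ((m:ℝ)+1 - k) / (((m:ℝ)+2) * ((m:ℝ)+1)) := by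
    rw [eq_div_iff (by positivity)]
    have h2' : ((m.choose k : ℝ)) * ((m:ℝ)+1) = c * ((m:ℝ)+2 - k) / ((m:ℝ)+2) * ((m:ℝ)+1 - k) := by
      rw [h2, hB]
    field_simp at h2' ⊢
    linarith [h2']
  have hD : (((m+2).choose (k+1) : ℝ)) = c * ((m:ℝ)+2 - k) / ((k:ℝ)+1) := by
    field_simp; linarith [h3]
  unfold Gw
  rw [hA, hB, hD]
  push_cast
  field_simp
  ring

lemma u_cast (M : ℕ) : (u M : ℝ) = ∑ k ∈ range (M+1), ((M.choose k : ℝ))^2 * 2^k := by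
  unfold u; push_cast; ring_nf

lemma u_rec (m : ℕ) :
    ((m:ℝ)+2) * (u (m+2) : ℝ) + ((m:ℝ)+1) * (u m : ℝ)
      = 3*(2*(m:ℝ)+3) * (u (m+1) : ℝ) := by
  have key : ∑ k ∈ range (m+3),
      (((m:ℝ)+2) * (((m+2).choose k : ℝ)^2 * 2^k)
      - 3*(2*(m:ℝ)+3) * (((m+1).choose k : ℝ)^2 * 2^k)
      + ((m:ℝ)+1) * ((m.choose k : ℝ)^2 * 2^k))
      = 0 := by
    rw [Finset.sum_congr rfl (fun k _ => ptwise m k), Finset.sum_range_sub (Gw m)]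
    have g0 : Gw m 0 = 0 := by simp [Gw]
    have g1 : Gw m (m+3) = 0 := by
      have h : (m+2).choose (m+3) = 0 := Nat.choose_succ_self (m+2)
      simp [Gw, h]
    rw [g0, g1, sub_zero]
  have S2 : ∑ k ∈ range (m+3), (((m+2).choose k : ℝ))^2 * 2^k = (u (m+2) : ℝ) := by
    rw [u_cast]
  have S1 : ∑ k ∈ range (m+3), (((m+1).choose k : ℝ))^2 * 2^k = (u (m+1) : ℝ) := by
    rw [Finset.sum_range_succ, u_cast]
    have h : (m+1).choose (m+2) = 0 := Nat.choose_succ_self (m+1)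
    simp [h]
  have S0 : ∑ k ∈ range (m+3), ((m.choose k : ℝ))^2 * 2^k = (u m : ℝ) := by
    rw [Finset.sum_range_succ, Finset.sum_range_succ, u_cast]
    have h1 : m.choose (m+2) = 0 := Nat.choose_eq_zero_of_lt (by omega)
    have h2 : m.choose (m+1) = 0 := Nat.choose_succ_self m
    simp [h1, h2]
  rw [Finset.sum_add_distrib, Finset.sum_sub_distrib, ← Finset.mul_sum, ← Finset.mul_sum,
    ← Finset.mul_sum, S2, S1, S0] at key
  linarith

lemma cast3 (a b c : ℕ) :
    (((a+(b+c)).factorial : ℝ)) / ((a.factorial : ℝ) * (b.factorial : ℝ) * (c.factorial : ℝ))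
      = ((a+(b+c)).choose a : ℝ) * ((b+c).choose c : ℝ) := by
  rw [Nat.cast_choose ℝ (Nat.le_add_right a (b+c)), Nat.cast_choose ℝ (Nat.le_add_left c b),
    Nat.add_sub_cancel_left, Nat.add_sub_cancel]
  have h1 : (a.factorial : ℝ) ≠ 0 := by exact_mod_cast a.factorial_ne_zero
  have h2 : (b.factorial : ℝ) ≠ 0 := by exact_mod_cast b.factorial_ne_zero
  have h3 : (c.factorial : ℝ) ≠ 0 := by exact_mod_cast c.factorial_ne_zero
  have h4 : ((b+c).factorial : ℝ) ≠ 0 := by exact_mod_cast (b+c).factorial_ne_zero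
  field_simp

lemma eval_gPoly (n d : ℕ) :
    (gPoly n d).eval 1
      = ∑ i ∈ Finset.Icc 1 (min d (n-d)),
          (((n-i-1).choose (d-i) * (n-d-1).choose (i-1) : ℕ) : ℝ) := by
  unfold gPoly
  rw [Polynomial.eval_finset_sum]
  refine Finset.sum_congr rfl fun i hi => ?_
  obtain ⟨h1, h2⟩ := Finset.mem_Icc.mp hi
  have hd : i ≤ d := le_trans h2 (min_le_left _ _)
  have hnd : i ≤ n - d := le_trans h2 (min_le_right _ _)
  simp only [Polynomial.eval_mul, Polynomial.eval_C, Polynomial.eval_pow, Polynomial.eval_X,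
    one_pow, mul_one]
  rw [show n - i - 1 = (d-i) + ((n-d-i) + (i-1)) by omega,
    show n - d - 1 = (n-d-i) + (i-1) by omega, cast3]
  push_cast
  ring

lemma eval_even (m : ℕ) : (gPoly (2*m+2) (m+1)).eval 1 = (u m : ℝ) := by
  rw [eval_gPoly, show min (m+1) ((2*m+2) - (m+1)) = m+1 by omega, ← Nat.cast_sum]
  congr 1
  rw [show Finset.Icc 1 (m+1) = Finset.Ico 1 (m+2) by rw [← Finset.Ico_add_one_right_eq_Icc]; rfl,
    Finset.sum_Ico_eq_sum_range, show m+2-1 = m+1 by omega, ← sumA m]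
  refine Finset.sum_congr rfl fun j hj => ?_
  simp only [Finset.mem_range] at hj
  rw [show 2*m+2 - (1+j) - 1 = 2*m - j by omega, show m+1 - (1+j) = m - j by omega,
    show 2*m+2 - (m+1) - 1 = m by omega, show 1+j-1 = j by omega]

lemma eval_odd (m : ℕ) : (gPoly (2*m+3) (m+1)).eval 1 = (v m : ℝ) := by
  rw [eval_gPoly, show min (m+1) ((2*m+3) - (m+1)) = m+1 by omega, ← Nat.cast_sum]
  congr 1
  rw [show Finset.Icc 1 (m+1) = Finset.Ico 1 (m+2) by rw [← Finset.Ico_add_one_right_eq_Icc]; rfl,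
    Finset.sum_Ico_eq_sum_range, show m+2-1 = m+1 by omega, ← sumB m]
  refine Finset.sum_congr rfl fun j hj => ?_
  simp only [Finset.mem_range] at hj
  rw [show 2*m+3 - (1+j) - 1 = 2*m+1 - j by omega, show m+1 - (1+j) = m - j by omega,
    show 2*m+3 - (m+1) - 1 = m+1 by omega, show 1+j-1 = j by omega]

noncomputable def Xs (m : ℕ) : ℝ := (u (m+1) : ℝ) / (u m : ℝ)

noncomputable def L : ℝ := 3 + 2 * Real.sqrt 2

lemma sqrt2_lb : (1.4:ℝ) ≤ Real.sqrt 2 := by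
  rw [show (1.4:ℝ) = Real.sqrt (1.4^2) by rw [Real.sqrt_sq (by norm_num)]]
  exact Real.sqrt_le_sqrt (by norm_num)

lemma sqrt2_ub : Real.sqrt 2 ≤ 1.5 := by
  rw [show (1.5:ℝ) = Real.sqrt (1.5^2) by rw [Real.sqrt_sq (by norm_num)]]
  exact Real.sqrt_le_sqrt (by norm_num)

lemma L_sq : L^2 = 6*L - 1 := by
  have h : Real.sqrt 2 ^ 2 = 2 := Real.sq_sqrt (by norm_num)
  unfold L; nlinarith [h]

lemma upos' (m : ℕ) : (0:ℝ) < (u m : ℝ) := by exact_mod_cast u_pos m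

lemma X_formula (m : ℕ) :
    Xs (m+1) = (3*(2*(m:ℝ)+3) * (u (m+1):ℝ) - ((m:ℝ)+1) * (u m:ℝ))
      / (((m:ℝ)+2) * (u (m+1):ℝ)) := by
  have h1 := upos' (m+1)
  unfold Xs
  rw [show u (m+1+1) = u (m+2) from rfl,
    div_eq_div_iff (ne_of_gt h1) (by positivity)]
  linear_combination ((u (m+1) : ℝ)) * u_rec m

lemma Xrec (m : ℕ) :
    Xs (m+1) = 6 - 3/((m:ℝ)+2) - 1/(Xs m) + 1/(((m:ℝ)+2) * Xs m) := by
  have h0 := upos' m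
  have h1 := upos' (m+1)
  rw [X_formula]
  unfold Xs
  field_simp
  ring

lemma X_ge (m : ℕ) : 3 ≤ Xs m := by
  induction m with
  | zero =>
      have h1 : u 0 = 1 := by decide
      have h2 : u 1 = 3 := by decide
      unfold Xs; rw [h1, h2]; norm_num
  | succ m ih =>
      have h0 : (0:ℝ) < Xs m := lt_of_lt_of_le (by norm_num) ih
      have hm0 : (0:ℝ) ≤ (m:ℝ) := Nat.cast_nonneg m
      have e1 : 3/((m:ℝ)+2) ≤ 3/2 :=
        div_le_div_of_nonneg_left (by norm_num) (by norm_num) (by linarith)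
      have e2 : 1/(Xs m) ≤ 1/3 :=
        div_le_div_of_nonneg_left (by norm_num) (by norm_num) ih
      have e3 : 0 < 1/(((m:ℝ)+2) * Xs m) := by positivity
      rw [Xrec]
      linarith

lemma X_err (m : ℕ) :
    |Xs (m+1) - L| ≤ |Xs m - L|/17 + 3/((m:ℝ)+2) := by
  have h0 : (3:ℝ) ≤ Xs m := X_ge m
  have hL : (5.8:ℝ) ≤ L := by unfold L; nlinarith [sqrt2_lb]
  have hL' : L ≤ 6 := by unfold L; nlinarith [sqrt2_ub]
  have hXpos : (0:ℝ) < Xs m := by linarith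
  have hLpos : (0:ℝ) < L := by linarith
  have hm0 : (0:ℝ) ≤ (m:ℝ) := Nat.cast_nonneg m
  have hm2 : (0:ℝ) < (m:ℝ)+2 := by linarith
  have h6 : 6 - L = 1/L := by
    rw [eq_div_iff (ne_of_gt hLpos)]; nlinarith [L_sq]
  have hsplit : (Xs m - L)/(L * Xs m) = 1/L - 1/(Xs m) := by
    field_simp
  have key : Xs (m+1) - L
      = (Xs m - L)/(L * Xs m) + (-(3/((m:ℝ)+2)) + 1/(((m:ℝ)+2) * Xs m)) := by
    rw [Xrec, hsplit, ← h6]; ring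
  rw [key]
  refine le_trans (abs_add_le _ _) ?_
  have e1 : |(Xs m - L)/(L * Xs m)| ≤ |Xs m - L|/17 := by
    have h17 : (17:ℝ) ≤ L * Xs m := by nlinarith
    rw [abs_div, abs_of_pos (by nlinarith : (0:ℝ) < L * Xs m)]
    exact div_le_div_of_nonneg_left (abs_nonneg _) (by norm_num) h17
  have e2 : |(-(3/((m:ℝ)+2)) + 1/(((m:ℝ)+2) * Xs m))| ≤ 3/((m:ℝ)+2) := by
    have hp : (0:ℝ) < 1/(((m:ℝ)+2) * Xs m) := by positivity
    have h1 : 1/(((m:ℝ)+2) * Xs m) ≤ 1/((m:ℝ)+2) :=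
      div_le_div_of_nonneg_left (by norm_num) hm2 (by nlinarith)
    have h3 : 3/((m:ℝ)+2) = 3*(1/((m:ℝ)+2)) := by ring
    have hq : (0:ℝ) < 1/((m:ℝ)+2) := by positivity
    rw [abs_le]
    constructor <;> [linarith; linarith]
  linarith

lemma X_bound : ∀ m : ℕ, 1 ≤ m → |Xs m - L| ≤ 10/(m:ℝ) := by
  intro m hm
  induction m with
  | zero => omega
  | succ m ih =>
      rcases Nat.eq_or_lt_of_le hm with h1 | h1
      · -- m+1 = 1
        have hm0 : m = 0 := by omega
        subst hm0
        have h1 : u 1 = 3 := by decide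
        have h2 : u 2 = 13 := by decide
        have hX1 : Xs 1 = 13/3 := by unfold Xs; rw [h1, h2]; norm_num
        have hL : (5.8:ℝ) ≤ L := by unfold L; nlinarith [sqrt2_lb]
        have hL' : L ≤ 6 := by unfold L; nlinarith [sqrt2_ub]
        rw [hX1, abs_le]
        norm_num
        constructor <;> linarith
      · have hm1 : 1 ≤ m := by omega
        have ihm := ih hm1
        have step := X_err m
        have hmR : (1:ℝ) ≤ (m:ℝ) := by exact_mod_cast hm1
        have final : (10/(m:ℝ))/17 + 3/((m:ℝ)+2) ≤ 10/((m:ℝ)+1) := by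
          rw [div_div, div_add_div _ _ (by positivity) (by positivity),
            div_le_div_iff₀ (by positivity) (by positivity)]
          nlinarith
        have h17 : |Xs m - L|/17 ≤ (10/(m:ℝ))/17 := by linarith
        push_cast
        linarith

lemma X_tendsto : Tendsto Xs atTop (nhds L) := by
  rw [tendsto_iff_dist_tendsto_zero]
  simp only [Real.dist_eq]
  apply squeeze_zero' (Filter.Eventually.of_forall fun m => abs_nonneg _)
  · exact Filter.eventually_atTop.2 ⟨1, fun m hm => X_bound m hm⟩
  · exact tendsto_const_div_atTop_nhds_zero_nat 10

lemma vpos' (m : ℕ) : (0:ℝ) < (v m : ℝ) := by exact_mod_cast v_pos m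

lemma sq2 : Real.sqrt 2 ^ 2 = 2 := Real.sq_sqrt (by norm_num)

lemma L_pos : (0:ℝ) < L := by unfold L; nlinarith [sqrt2_lb]

lemma odd_ratio (m : ℕ) : (u m : ℝ) / (v m : ℝ) = 2 / (Xs m - 1) := by
  have h0 := upos' m
  have h1 := vpos' m
  have hs : (u (m+1) : ℝ) = 2*(v m : ℝ) + (u m : ℝ) := by exact_mod_cast u_succ m
  unfold Xs
  have hden : (2*(v m : ℝ) + (u m : ℝ)) / (u m : ℝ) - 1 = 2*(v m : ℝ)/(u m : ℝ) := by
    field_simp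
    ring
  rw [hs, hden, div_div_eq_mul_div, div_eq_div_iff (ne_of_gt h1) (by positivity)]
  ring

lemma even_ratio (m : ℕ) : (v m : ℝ) / (u (m+1) : ℝ) = (Xs m - 1) / (2 * Xs m) := by
  have h0 := upos' m
  have h1 := upos' (m+1)
  have hs : (u (m+1) : ℝ) = 2*(v m : ℝ) + (u m : ℝ) := by exact_mod_cast u_succ m
  unfold Xs
  rw [div_eq_div_iff (ne_of_gt h1) (by positivity)]
  rw [hs]
  field_simp
  ring

lemma lim_odd : Tendsto (fun m => (u m : ℝ) / (v m : ℝ)) atTop (nhds (-1 + Real.sqrt 2)) := by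
  have hne : L - 1 ≠ 0 := by unfold L; nlinarith [sqrt2_lb]
  have h : Tendsto (fun m => 2 / (Xs m - 1)) atTop (nhds (2 / (L - 1))) :=
    Filter.Tendsto.div tendsto_const_nhds (X_tendsto.sub_const 1) hne
  have hval : 2 / (L - 1) = -1 + Real.sqrt 2 := by
    rw [div_eq_iff hne]; unfold L; nlinarith [sq2]
  rw [← hval]
  exact h.congr fun m => (odd_ratio m).symm

lemma lim_even :
    Tendsto (fun m => (v m : ℝ) / (u (m+1) : ℝ)) atTop (nhds (-1 + Real.sqrt 2)) := by
  have hne : (2:ℝ) * L ≠ 0 := by nlinarith [L_pos]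
  have h : Tendsto (fun m => (Xs m - 1) / (2 * Xs m)) atTop (nhds ((L - 1) / (2 * L))) :=
    Filter.Tendsto.div (X_tendsto.sub_const 1) (tendsto_const_nhds.mul X_tendsto) hne
  have hval : (L - 1) / (2 * L) = -1 + Real.sqrt 2 := by
    rw [div_eq_iff hne]; unfold L; nlinarith [sq2]
  rw [← hval]
  exact h.congr fun m => (even_ratio m).symm


end GAux

open GAux

/-- Let `f_n(t) = g_{n,⌊n/2⌋}(t)` and `r_n(1) = f_{n-1}(1)/f_n(1)` (note `f_n(1) > 0`
for `n ≥ 2`). Then `r_n(1) → -1 + √2` as `n → ∞`. -/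
theorem gPoly_ratio_tendsto :
    (∀ n : ℕ, 2 ≤ n → 0 < (gPoly n (n / 2)).eval 1) ∧
    Filter.Tendsto
      (fun n : ℕ => (gPoly (n - 1) ((n - 1) / 2)).eval 1 / (gPoly n (n / 2)).eval 1)
      Filter.atTop (nhds (-1 + Real.sqrt 2)) := by
  have hEven : ∀ m : ℕ, (gPoly (2*m+2) ((2*m+2)/2)).eval 1 = (u m : ℝ) := by
    intro m
    rw [show (2*m+2)/2 = m+1 by omega, eval_even]
  have hOdd : ∀ m : ℕ, (gPoly (2*m+3) ((2*m+3)/2)).eval 1 = (v m : ℝ) := by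
    intro m
    rw [show (2*m+3)/2 = m+1 by omega, eval_odd]
  constructor
  · intro n hn
    obtain ⟨m, hm | hm⟩ : ∃ m, n = 2*m+2 ∨ n = 2*m+3 := ⟨(n-2)/2, by omega⟩
    · subst hm; rw [hEven]; exact_mod_cast u_pos m
    · subst hm; rw [hOdd]; exact_mod_cast v_pos m
  · rw [Metric.tendsto_atTop]
    intro ε hε
    obtain ⟨N₁, hN₁⟩ := (Metric.tendsto_atTop.mp lim_odd) ε hε
    obtain ⟨N₂, hN₂⟩ := (Metric.tendsto_atTop.mp lim_even) ε hε
    refine ⟨2*(N₁+N₂)+4, fun n hn => ?_⟩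
    obtain ⟨m, hm | hm⟩ : ∃ m, (n = 2*m+3 ∧ N₁ ≤ m) ∨ (n = 2*m+4 ∧ N₂ ≤ m) := by
      rcases Nat.even_or_odd n with ⟨t, ht⟩ | ⟨t, ht⟩
      · exact ⟨t-2, Or.inr (by omega)⟩
      · exact ⟨t-1, Or.inl (by omega)⟩
    · obtain ⟨hm, hmN⟩ := hm
      subst hm
      have e1 : (2*m+3) - 1 = 2*m+2 := by omega
      rw [e1, hEven, hOdd]
      exact hN₁ m hmN
    · obtain ⟨hm, hmN⟩ := hm
      subst hm
      have e1 : (2*m+4) - 1 = 2*m+3 := by omega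
      have e2 : 2*m+4 = 2*(m+1)+2 := by omega
      rw [e1, hOdd, e2, hEven]
      exact hN₂ m hmN
end

section
/- For every integer n ≥ 3, letting f_n(t) = g_{n,⌊n/2⌋}(t), the identity (⌈n/2⌉ + 1)·f_n(1) = (⌈n/2⌉ − 1)·f_{n−1}(1) + 2·f'_n(1) holds, where f'_n denotes the derivative of f_n with respect to t. Equivalently, the mean μ_n = f'_n(1)/f_n(1) satisfies μ_n = (1 − ((⌈n/2⌉−1)/(⌈n/2⌉+1))·(f_{n−1}(1)/f_n(1)))·(⌈n/2⌉+1)/2. -/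
open Polynomial

lemma gPoly_eval_one (n d : ℕ) : (gPoly n d).eval 1 =
    ∑ i ∈ Finset.Icc 1 (min d (n - d)),
      ((Nat.factorial (n - i - 1) : ℝ) /
        ((Nat.factorial (d - i) : ℝ) * (Nat.factorial (n - d - i) : ℝ) *
          (Nat.factorial (i - 1) : ℝ))) := by
  simp [gPoly, eval_finset_sum]

lemma gPoly_deriv_eval_one (n d : ℕ) : (derivative (gPoly n d)).eval 1 =
    ∑ i ∈ Finset.Icc 1 (min d (n - d)),
      (i : ℝ) * ((Nat.factorial (n - i - 1) : ℝ) /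
        ((Nat.factorial (d - i) : ℝ) * (Nat.factorial (n - d - i) : ℝ) *
          (Nat.factorial (i - 1) : ℝ))) := by
  rw [gPoly, derivative_sum, eval_finset_sum]
  refine Finset.sum_congr rfl fun i hi => ?_
  rw [derivative_C_mul, derivative_X_pow, eval_mul, eval_C, eval_mul, eval_C, eval_pow, eval_X]
  ring

lemma telescopeR (K : ℕ) (g : ℕ → ℝ) :
    ∑ i ∈ Finset.Icc 1 K, (g (i+1) - g i) = g (K+1) - g 1 := by
  induction K with
  | zero => simp
  | succ k ih => rw [Finset.sum_Icc_succ_top (by omega), ih]; ring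

/-- telescoping auxiliary for the odd case `n = 2m+1`. -/
noncomputable def gO (m i : ℕ) : ℝ :=
  if i ≤ m then
    ((i:ℝ)-1) * (Nat.factorial (2*m-i) : ℝ) /
      ((Nat.factorial (m-i) : ℝ) * (Nat.factorial (m+1-i) : ℝ) * (Nat.factorial (i-1) : ℝ))
  else 0

lemma gO_key (m : ℕ) (hm : 1 ≤ m) :
    ((m:ℝ)+1+1) * (∑ i ∈ Finset.Icc 1 m, ((Nat.factorial (2*m+1-i-1) : ℝ) /
        ((Nat.factorial (m-i) : ℝ) * (Nat.factorial (m+1-i) : ℝ) * (Nat.factorial (i-1) : ℝ))))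
      - ((m:ℝ)+1-1) * (∑ i ∈ Finset.Icc 1 m, ((Nat.factorial (2*m-i-1) : ℝ) /
        ((Nat.factorial (m-i) : ℝ) * (Nat.factorial (m-i) : ℝ) * (Nat.factorial (i-1) : ℝ))))
      - 2 * (∑ i ∈ Finset.Icc 1 m, ((i:ℝ) * ((Nat.factorial (2*m+1-i-1) : ℝ) /
        ((Nat.factorial (m-i) : ℝ) * (Nat.factorial (m+1-i) : ℝ) * (Nat.factorial (i-1) : ℝ)))))
    = 0 := by
  rw [Finset.mul_sum, Finset.mul_sum, Finset.mul_sum, ← Finset.sum_sub_distrib,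
    ← Finset.sum_sub_distrib]
  have step : ∀ i ∈ Finset.Icc 1 m,
      (((m:ℝ)+1+1) * ((Nat.factorial (2*m+1-i-1) : ℝ) /
          ((Nat.factorial (m-i) : ℝ) * (Nat.factorial (m+1-i) : ℝ) * (Nat.factorial (i-1) : ℝ)))
        - ((m:ℝ)+1-1) * ((Nat.factorial (2*m-i-1) : ℝ) /
            ((Nat.factorial (m-i) : ℝ) * (Nat.factorial (m-i) : ℝ) * (Nat.factorial (i-1) : ℝ)))
        - 2 * ((i:ℝ) * ((Nat.factorial (2*m+1-i-1) : ℝ) /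
            ((Nat.factorial (m-i) : ℝ) * (Nat.factorial (m+1-i) : ℝ) * (Nat.factorial (i-1) : ℝ)))))
      = gO m (i+1) - gO m i := by
    intro i hi
    simp only [Finset.mem_Icc] at hi
    rcases eq_or_lt_of_le hi.2 with h | h
    · -- i = m
      subst h
      obtain ⟨k, rfl⟩ : ∃ k, i = k+1 := ⟨i-1, by omega⟩
      rw [gO, gO, if_neg (by omega), if_pos (by omega)]
      simp only [show 2*(k+1)+1-(k+1)-1 = k+1 from by omega,
        show (k+1)-(k+1) = 0 from by omega, show (k+1)+1-(k+1) = 1 from by omega,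
        show (k+1)-1 = k from by omega, show 2*(k+1)-(k+1)-1 = k from by omega,
        show 2*(k+1)-(k+1) = k+1 from by omega,
        Nat.factorial_zero, Nat.factorial_one]
      have e4 : (Nat.factorial (k+1) : ℝ) = ((k:ℝ)+1) * Nat.factorial k := by
        rw [Nat.factorial_succ]; push_cast; ring
      have hk : (Nat.factorial k : ℝ) ≠ 0 := Nat.cast_ne_zero.2 (Nat.factorial_ne_zero k)
      rw [e4]
      push_cast
      field_simp
      ring
    · -- i < m
      obtain ⟨k, rfl⟩ : ∃ k, i = k+1 := ⟨i-1, by omega⟩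
      obtain ⟨s, rfl⟩ : ∃ s, m = k+s+2 := ⟨m-k-2, by omega⟩
      rw [gO, gO, if_pos (by omega), if_pos (by omega)]
      simp only [show 2*(k+s+2)+1-(k+1)-1 = k+2*s+3 from by omega,
        show (k+s+2)-(k+1) = s+1 from by omega,
        show (k+s+2)+1-(k+1) = s+2 from by omega,
        show (k+1)-1 = k from by omega,
        show 2*(k+s+2)-(k+1)-1 = k+2*s+2 from by omega,
        show 2*(k+s+2)-(k+1+1) = k+2*s+2 from by omega,
        show (k+s+2)-(k+1+1) = s from by omega,
        show (k+s+2)+1-(k+1+1) = s+1 from by omega,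
        show (k+1+1)-1 = k+1 from by omega,
        show 2*(k+s+2)-(k+1) = k+2*s+3 from by omega]
      have e1 : (Nat.factorial (k+2*s+3) : ℝ) = ((k:ℝ)+2*s+3) * Nat.factorial (k+2*s+2) := by
        rw [show k+2*s+3 = (k+2*s+2)+1 from rfl, Nat.factorial_succ]; push_cast; ring
      have e2 : (Nat.factorial (s+2) : ℝ) = ((s:ℝ)+2) * Nat.factorial (s+1) := by
        rw [show s+2 = (s+1)+1 from rfl, Nat.factorial_succ]; push_cast; ring
      have e3 : (Nat.factorial (s+1) : ℝ) = ((s:ℝ)+1) * Nat.factorial s := by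
        rw [Nat.factorial_succ]; push_cast; ring
      have e4 : (Nat.factorial (k+1) : ℝ) = ((k:ℝ)+1) * Nat.factorial k := by
        rw [Nat.factorial_succ]; push_cast; ring
      have hk : (Nat.factorial k : ℝ) ≠ 0 := Nat.cast_ne_zero.2 (Nat.factorial_ne_zero k)
      have hs : (Nat.factorial s : ℝ) ≠ 0 := Nat.cast_ne_zero.2 (Nat.factorial_ne_zero s)
      have hc : (Nat.factorial (k+2*s+2) : ℝ) ≠ 0 := Nat.cast_ne_zero.2 (Nat.factorial_ne_zero _)
      have h1 : ((s:ℝ)+1) ≠ 0 := by positivity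
      have h2 : ((s:ℝ)+2) ≠ 0 := by positivity
      have h3 : ((k:ℝ)+1) ≠ 0 := by positivity
      rw [e1, e2, e3, e4]
      push_cast
      field_simp
      ring
  rw [Finset.sum_congr rfl step, telescopeR]
  rw [gO, gO, if_neg (by omega), if_pos (by omega)]
  norm_num

/-- telescoping auxiliary for the even case `n = 2p+4`. -/
noncomputable def gE (p i : ℕ) : ℝ :=
  ((i:ℝ)-1) * (Nat.factorial (2*p+3-i) : ℝ) /
    ((Nat.factorial (p+2-i) : ℝ) * (Nat.factorial (p+2-i) : ℝ) * (Nat.factorial (i-1) : ℝ))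

lemma gE_key (p : ℕ) :
    ((p:ℝ)+2+1) * (∑ i ∈ Finset.Icc 1 (p+1), ((Nat.factorial (2*p+4-i-1) : ℝ) /
        ((Nat.factorial (p+2-i) : ℝ) * (Nat.factorial (p+2-i) : ℝ) * (Nat.factorial (i-1) : ℝ))))
      - ((p:ℝ)+2-1) * (∑ i ∈ Finset.Icc 1 (p+1), ((Nat.factorial (2*p+3-i-1) : ℝ) /
        ((Nat.factorial (p+1-i) : ℝ) * (Nat.factorial (p+2-i) : ℝ) * (Nat.factorial (i-1) : ℝ))))
      - 2 * (∑ i ∈ Finset.Icc 1 (p+1), ((i:ℝ) * ((Nat.factorial (2*p+4-i-1) : ℝ) /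
        ((Nat.factorial (p+2-i) : ℝ) * (Nat.factorial (p+2-i) : ℝ) * (Nat.factorial (i-1) : ℝ)))))
    = (p:ℝ)+1 := by
  rw [Finset.mul_sum, Finset.mul_sum, Finset.mul_sum, ← Finset.sum_sub_distrib,
    ← Finset.sum_sub_distrib]
  have step : ∀ i ∈ Finset.Icc 1 (p+1),
      (((p:ℝ)+2+1) * ((Nat.factorial (2*p+4-i-1) : ℝ) /
        ((Nat.factorial (p+2-i) : ℝ) * (Nat.factorial (p+2-i) : ℝ) * (Nat.factorial (i-1) : ℝ)))
      - ((p:ℝ)+2-1) * ((Nat.factorial (2*p+3-i-1) : ℝ) /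
        ((Nat.factorial (p+1-i) : ℝ) * (Nat.factorial (p+2-i) : ℝ) * (Nat.factorial (i-1) : ℝ)))
      - 2 * ((i:ℝ) * ((Nat.factorial (2*p+4-i-1) : ℝ) /
        ((Nat.factorial (p+2-i) : ℝ) * (Nat.factorial (p+2-i) : ℝ) * (Nat.factorial (i-1) : ℝ)))))
      = gE p (i+1) - gE p i := by
    intro i hi
    simp only [Finset.mem_Icc] at hi
    obtain ⟨k, rfl⟩ : ∃ k, i = k+1 := ⟨i-1, by omega⟩
    obtain ⟨s, rfl⟩ : ∃ s, p = k+s := ⟨p-k, by omega⟩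
    rw [gE, gE]
    simp only [show 2*(k+s)+4-(k+1)-1 = k+2*s+2 from by omega,
      show (k+s)+2-(k+1) = s+1 from by omega,
      show (k+1)-1 = k from by omega,
      show 2*(k+s)+3-(k+1)-1 = k+2*s+1 from by omega,
      show (k+s)+1-(k+1) = s from by omega,
      show 2*(k+s)+3-(k+1) = k+2*s+2 from by omega,
      show 2*(k+s)+3-(k+1+1) = k+2*s+1 from by omega,
      show (k+s)+2-(k+1+1) = s from by omega,
      show (k+1+1)-1 = k+1 from by omega]
    have e1 : (Nat.factorial (k+2*s+2) : ℝ) = ((k:ℝ)+2*s+2) * Nat.factorial (k+2*s+1) := by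
      rw [show k+2*s+2 = (k+2*s+1)+1 from rfl, Nat.factorial_succ]; push_cast; ring
    have e3 : (Nat.factorial (s+1) : ℝ) = ((s:ℝ)+1) * Nat.factorial s := by
      rw [Nat.factorial_succ]; push_cast; ring
    have e4 : (Nat.factorial (k+1) : ℝ) = ((k:ℝ)+1) * Nat.factorial k := by
      rw [Nat.factorial_succ]; push_cast; ring
    have hk : (Nat.factorial k : ℝ) ≠ 0 := Nat.cast_ne_zero.2 (Nat.factorial_ne_zero k)
    have hs : (Nat.factorial s : ℝ) ≠ 0 := Nat.cast_ne_zero.2 (Nat.factorial_ne_zero s)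
    have hc : (Nat.factorial (k+2*s+1) : ℝ) ≠ 0 := Nat.cast_ne_zero.2 (Nat.factorial_ne_zero _)
    have h1 : ((s:ℝ)+1) ≠ 0 := by positivity
    have h3 : ((k:ℝ)+1) ≠ 0 := by positivity
    rw [e1, e3, e4]
    push_cast
    field_simp
    ring
  rw [Finset.sum_congr rfl step, telescopeR]
  rw [gE, gE]
  simp only [show 2*p+3-(p+1+1) = p+1 from by omega, show p+2-(p+1+1) = 0 from by omega,
    show (p+1+1)-1 = p+1 from by omega, show 2*p+3-1 = 2*p+2 from by omega,
    show p+2-1 = p+1 from by omega, Nat.factorial_zero]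
  have hp : (Nat.factorial (p+1) : ℝ) ≠ 0 := Nat.cast_ne_zero.2 (Nat.factorial_ne_zero _)
  push_cast
  field_simp
  ring

/-- For `n ≥ 3`, with `f_n(t) = g_{n,⌊n/2⌋}(t)` and `⌈n/2⌉ = (n+1)/2` (ceiling),
`(⌈n/2⌉ + 1) f_n(1) = (⌈n/2⌉ - 1) f_{n-1}(1) + 2 f'_n(1)`. -/
theorem gPoly_mean_identity (n : ℕ) (hn : 3 ≤ n) :
    ((((n + 1) / 2 : ℕ) : ℝ) + 1) * (gPoly n (n / 2)).eval 1 =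
      ((((n + 1) / 2 : ℕ) : ℝ) - 1) * (gPoly (n - 1) ((n - 1) / 2)).eval 1 +
        2 * (derivative (gPoly n (n / 2))).eval 1 := by
  rw [gPoly_eval_one, gPoly_eval_one, gPoly_deriv_eval_one]
  rcases Nat.even_or_odd n with he | ho
  · -- even case: n = 2p+4
    obtain ⟨m, rfl⟩ := he
    obtain ⟨p, rfl⟩ : ∃ p, m = p+2 := ⟨m-2, by omega⟩
    simp only [show (p+2)+(p+2) = 2*p+4 from by omega]
    simp only [show (2*p+4+1)/2 = p+2 from by omega, show (2*p+4)/2 = p+2 from by omega,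
      show 2*p+4-1 = 2*p+3 from by omega, show (2*p+3)/2 = p+1 from by omega,
      show 2*p+4-(p+2) = p+2 from by omega, show 2*p+3-(p+1) = p+2 from by omega,
      min_self, show min (p+1) (p+2) = p+1 from by omega]
    push_cast
    rw [Finset.sum_Icc_succ_top (show 1 ≤ p+1+1 from by omega),
      Finset.sum_Icc_succ_top (show 1 ≤ p+1+1 from by omega)]
    simp only [show 2*p+4-(p+1+1)-1 = p+1 from by omega,
      show p+2-(p+1+1) = 0 from by omega, show (p+1+1)-1 = p+1 from by omega,
      Nat.factorial_zero, Nat.cast_one, one_mul]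
    rw [div_self (Nat.cast_ne_zero.2 (Nat.factorial_ne_zero (p+1)) : (Nat.factorial (p+1) : ℝ) ≠ 0)]
    have key := gE_key p
    push_cast
    linarith [key]
  · -- odd case: n = 2m+1
    obtain ⟨m, rfl⟩ := ho
    have hm : 1 ≤ m := by omega
    simp only [show (2*m+1+1)/2 = m+1 from by omega, show (2*m+1)/2 = m from by omega,
      show 2*m+1-1 = 2*m from by omega, show (2*m)/2 = m from by omega,
      show 2*m+1-m = m+1 from by omega, show 2*m-m = m from by omega,
      min_self, show min m (m+1) = m from by omega]
    push_cast
    linarith [gO_key m hm]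
end
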